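/- arXiv:2402.08391 — 3 statements merged into one kernel-verified Lean document; each statement's English description precedes it below -/
import Mathlib

section
/- Let φ be a real-valued C² function on [−1,1] with φ(0) = φ′(0) = 0 and 1/10 ≤ φ″(x) ≤ 10 for all |x| ≤ 1. Then the map y(x) = sgn(x)·(2φ(x))^{1/2} is a strictly increasing C¹ bijection from [−1,1] onto the interval [y(−1), y(1)], its inverse x(y) is C¹, satisfies x′(y) = y/φ′(x(y)) for y ≠ 0 and x′(0) = φ″(0)^{−1/2}, and there exist absolute constants 0 < c < C (independent of φ) with c ≤ x′(y) ≤ C for all y ∈ [y(−1), y(1)]. -/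
open Real Set
open Filter Topology

noncomputable section

/-- The change of variables `y(x) = sgn(x) · √(2 φ(x))`. -/
noncomputable def cov (φ : ℝ → ℝ) : ℝ → ℝ :=
  fun x => Real.sign x * Real.sqrt (2 * φ x)

private lemma div_sqrt_bounds {u v s : ℝ} (hs : 0 < s) (hu1 : s/10 ≤ u) (hu2 : u ≤ 10*s)
    (hv1 : s^2/10 ≤ v) (hv2 : v ≤ 10*s^2) :
    1/32 ≤ u / Real.sqrt v ∧ u / Real.sqrt v ≤ 32 := by
  have hsv : (s/(16/5)) ≤ Real.sqrt v := by
    have h1 : (s/(16/5))^2 ≤ v := by nlinarith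
    calc s/(16/5) = Real.sqrt ((s/(16/5))^2) := (Real.sqrt_sq (by positivity)).symm
    _ ≤ Real.sqrt v := Real.sqrt_le_sqrt h1
  have hsv2 : Real.sqrt v ≤ (16/5)*s := by
    have h1 : v ≤ ((16/5)*s)^2 := by nlinarith
    calc Real.sqrt v ≤ Real.sqrt (((16/5)*s)^2) := Real.sqrt_le_sqrt h1
    _ = (16/5)*s := Real.sqrt_sq (by positivity)
  have hvpos : 0 < Real.sqrt v := lt_of_lt_of_le (by positivity) hsv
  constructor
  · rw [le_div_iff₀ hvpos]; nlinarith
  · rw [div_le_iff₀ hvpos]; nlinarith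

theorem covAux (φ : ℝ → ℝ)
    (hφ : ContDiffOn ℝ 2 φ (Set.Icc (-1) 1))
    (h0 : φ 0 = 0)
    (h1 : derivWithin φ (Set.Icc (-1) 1) 0 = 0)
    (h2 : ∀ x ∈ Set.Icc (-1:ℝ) 1,
      1/10 ≤ iteratedDerivWithin 2 φ (Set.Icc (-1) 1) x ∧
        iteratedDerivWithin 2 φ (Set.Icc (-1) 1) x ≤ 10) :
    StrictMonoOn (cov φ) (Set.Icc (-1) 1) ∧
    ContDiffOn ℝ 1 (cov φ) (Set.Icc (-1) 1) ∧
    Set.BijOn (cov φ) (Set.Icc (-1) 1) (Set.Icc (cov φ (-1)) (cov φ 1)) ∧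
    ∃ xinv : ℝ → ℝ,
      Set.InvOn xinv (cov φ) (Set.Icc (-1) 1) (Set.Icc (cov φ (-1)) (cov φ 1)) ∧
      ContDiffOn ℝ 1 xinv (Set.Icc (cov φ (-1)) (cov φ 1)) ∧
      (∀ z ∈ Set.Icc (cov φ (-1)) (cov φ 1), z ≠ 0 →
        derivWithin xinv (Set.Icc (cov φ (-1)) (cov φ 1)) z =
          z / derivWithin φ (Set.Icc (-1) 1) (xinv z)) ∧
      derivWithin xinv (Set.Icc (cov φ (-1)) (cov φ 1)) 0 =
        (Real.sqrt (iteratedDerivWithin 2 φ (Set.Icc (-1) 1) 0))⁻¹ ∧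
      ∀ z ∈ Set.Icc (cov φ (-1)) (cov φ 1),
        1/32 ≤ derivWithin xinv (Set.Icc (cov φ (-1)) (cov φ 1)) z ∧
          derivWithin xinv (Set.Icc (cov φ (-1)) (cov φ 1)) z ≤ 32 := by
  have h11 : (-1:ℝ) < 1 := by norm_num
  have hIu : UniqueDiffOn ℝ (Icc (-1:ℝ) 1) := uniqueDiffOn_Icc h11
  set f := derivWithin φ (Icc (-1:ℝ) 1) with hfdef
  have hfC : ContDiffOn ℝ 1 f (Icc (-1:ℝ) 1) := hφ.derivWithin hIu (by norm_num)
  have hfd : DifferentiableOn ℝ f (Icc (-1:ℝ) 1) := hfC.differentiableOn (by norm_num)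
  have hφd : DifferentiableOn ℝ φ (Icc (-1:ℝ) 1) := hφ.differentiableOn (by norm_num)
  have hφc : ContinuousOn φ (Icc (-1:ℝ) 1) := hφ.continuousOn
  have hfc : ContinuousOn f (Icc (-1:ℝ) 1) := hfC.continuousOn
  have hD2 : ∀ x ∈ Icc (-1:ℝ) 1, derivWithin f (Icc (-1:ℝ) 1) x
      = iteratedDerivWithin 2 φ (Icc (-1:ℝ) 1) x := by
    intro x hx
    rw [show (2:ℕ) = 1+1 from rfl, iteratedDerivWithin_succ',
      iteratedDerivWithin_one]
  have hmemI : ∀ x ∈ Ioo (-1:ℝ) 1, Icc (-1:ℝ) 1 ∈ 𝓝 x := fun x hx => Icc_mem_nhds hx.1 hx.2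
  have hdφ : ∀ x ∈ Ioo (-1:ℝ) 1, HasDerivAt φ (f x) x := fun x hx =>
    ((hφd x (Ioo_subset_Icc_self hx)).hasDerivWithinAt).hasDerivAt (hmemI x hx)
  have hdf : ∀ x ∈ Ioo (-1:ℝ) 1, HasDerivAt f (derivWithin f (Icc (-1:ℝ) 1) x) x := fun x hx =>
    ((hfd x (Ioo_subset_Icc_self hx)).hasDerivWithinAt).hasDerivAt (hmemI x hx)
  -- linear bounds on f
  have hf_lb : ∀ x ∈ Icc (-1:ℝ) 1, ∀ z ∈ Icc (-1:ℝ) 1, x ≤ z → 1/10*(z-x) ≤ f z - f x := by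
    apply (convex_Icc _ _).mul_sub_le_image_sub_of_le_deriv hfc
      (hfd.mono interior_subset)
    intro x hx
    rw [interior_Icc] at hx
    rw [(hdf x hx).deriv]
    rw [hD2 x (Ioo_subset_Icc_self hx)]
    exact (h2 x (Ioo_subset_Icc_self hx)).1
  have hf_ub : ∀ x ∈ Icc (-1:ℝ) 1, ∀ z ∈ Icc (-1:ℝ) 1, x ≤ z → f z - f x ≤ 10*(z-x) := by
    apply (convex_Icc _ _).image_sub_le_mul_sub_of_deriv_le hfc
      (hfd.mono interior_subset)
    intro x hx
    rw [interior_Icc] at hx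
    rw [(hdf x hx).deriv]
    rw [hD2 x (Ioo_subset_Icc_self hx)]
    exact (h2 x (Ioo_subset_Icc_self hx)).2
  have h0I : (0:ℝ) ∈ Icc (-1:ℝ) 1 := by constructor <;> norm_num
  have hfpos : ∀ x ∈ Icc (-1:ℝ) 1, 0 ≤ x → x/10 ≤ f x ∧ f x ≤ 10*x := by
    intro x hx hx0
    have l1 := hf_lb 0 h0I x hx hx0
    have l2 := hf_ub 0 h0I x hx hx0
    rw [h1] at l1 l2
    constructor <;> linarith
  have hfneg : ∀ x ∈ Icc (-1:ℝ) 1, x ≤ 0 → 10*x ≤ f x ∧ f x ≤ x/10 := by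
    intro x hx hx0
    have l1 := hf_lb x hx 0 h0I hx0
    have l2 := hf_ub x hx 0 h0I hx0
    rw [h1] at l1 l2
    constructor <;> linarith
  -- quadratic bounds on φ
  have key : ∀ (c : ℝ) (s : Set ℝ), s = Icc (0:ℝ) 1 ∨ s = Icc (-1:ℝ) 0 →
      (∀ x ∈ interior s, c * x ≤ f x) →
      MonotoneOn (fun x => φ x - c*x^2/2) s := by
    intro c s hs hc
    have hsub : s ⊆ Icc (-1:ℝ) 1 := by
      rcases hs with rfl | rfl <;> intro t ht <;>
        exact ⟨by linarith [ht.1], by linarith [ht.2]⟩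
    have hsubo : interior s ⊆ Ioo (-1:ℝ) 1 := by
      rcases hs with rfl | rfl <;> rw [interior_Icc] <;> intro t ht <;>
        exact ⟨by linarith [ht.1], by linarith [ht.2]⟩
    have hconv : Convex ℝ s := by rcases hs with rfl | rfl <;> exact convex_Icc _ _
    apply monotoneOn_of_deriv_nonneg hconv
    · exact ((hφc.mono hsub).sub (by fun_prop))
    · intro x hx
      exact (((hdφ x (hsubo hx)).sub (((hasDerivAt_pow 2 x).const_mul c).div_const
        2)).differentiableAt).differentiableWithinAt
    · intro x hx
      have hD : HasDerivAt (fun x => φ x - c*x^2/2) (f x - c*(2*x^(2-1))/2) x :=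
        (hdφ x (hsubo hx)).sub (((hasDerivAt_pow 2 x).const_mul c).div_const 2)
      rw [hD.deriv]
      have := hc x hx
      simp only [Nat.reduceSub, pow_one] at *
      linarith
  have key' : ∀ (c : ℝ) (s : Set ℝ), s = Icc (0:ℝ) 1 ∨ s = Icc (-1:ℝ) 0 →
      (∀ x ∈ interior s, f x ≤ c * x) →
      AntitoneOn (fun x => φ x - c*x^2/2) s := by
    intro c s hs hc
    have hsub : s ⊆ Icc (-1:ℝ) 1 := by
      rcases hs with rfl | rfl <;> intro t ht <;>
        exact ⟨by linarith [ht.1], by linarith [ht.2]⟩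
    have hsubo : interior s ⊆ Ioo (-1:ℝ) 1 := by
      rcases hs with rfl | rfl <;> rw [interior_Icc] <;> intro t ht <;>
        exact ⟨by linarith [ht.1], by linarith [ht.2]⟩
    have hconv : Convex ℝ s := by rcases hs with rfl | rfl <;> exact convex_Icc _ _
    apply antitoneOn_of_deriv_nonpos hconv
    · exact ((hφc.mono hsub).sub (by fun_prop))
    · intro x hx
      exact (((hdφ x (hsubo hx)).sub (((hasDerivAt_pow 2 x).const_mul c).div_const
        2)).differentiableAt).differentiableWithinAt
    · intro x hx
      have hD : HasDerivAt (fun x => φ x - c*x^2/2) (f x - c*(2*x^(2-1))/2) x :=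
        (hdφ x (hsubo hx)).sub (((hasDerivAt_pow 2 x).const_mul c).div_const 2)
      rw [hD.deriv]
      have := hc x hx
      simp only [Nat.reduceSub, pow_one] at *
      linarith
  have hφq : ∀ x ∈ Icc (-1:ℝ) 1, x^2/20 ≤ φ x ∧ φ x ≤ 5*x^2 := by
    intro x hx
    rcases le_total 0 x with hx0 | hx0
    · have hxm : x ∈ Icc (0:ℝ) 1 := ⟨hx0, hx.2⟩
      have h0m : (0:ℝ) ∈ Icc (0:ℝ) 1 := ⟨le_refl _, by norm_num⟩
      have m1 := key (1/10) (Icc 0 1) (Or.inl rfl) (fun t ht => by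
        rw [interior_Icc] at ht
        have := (hfpos t ⟨by linarith [ht.1], by linarith [ht.2]⟩ ht.1.le).1
        linarith) h0m hxm hx0
      have m2 := key' 10 (Icc 0 1) (Or.inl rfl) (fun t ht => by
        rw [interior_Icc] at ht
        have := (hfpos t ⟨by linarith [ht.1], by linarith [ht.2]⟩ ht.1.le).2
        linarith) h0m hxm hx0
      simp only [h0] at m1 m2
      constructor <;> nlinarith
    · have hxm : x ∈ Icc (-1:ℝ) 0 := ⟨hx.1, hx0⟩
      have h0m : (0:ℝ) ∈ Icc (-1:ℝ) 0 := ⟨by norm_num, le_refl _⟩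
      have m1 := key' (1/10) (Icc (-1) 0) (Or.inr rfl) (fun t ht => by
        rw [interior_Icc] at ht
        have := (hfneg t ⟨by linarith [ht.1], by linarith [ht.2]⟩ ht.2.le).2
        linarith) hxm h0m hx0
      have m2 := key 10 (Icc (-1) 0) (Or.inr rfl) (fun t ht => by
        rw [interior_Icc] at ht
        have := (hfneg t ⟨by linarith [ht.1], by linarith [ht.2]⟩ ht.2.le).1
        linarith) hxm h0m hx0
      simp only [h0] at m1 m2
      constructor <;> nlinarith
  have hφpos : ∀ x ∈ Icc (-1:ℝ) 1, x ≠ 0 → 0 < 2 * φ x := by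
    intro x hx hx0
    have h1 := (hφq x hx).1
    have h2' : 0 < x^2 := by positivity
    nlinarith
  set g : ℝ → ℝ := fun x => if x = 0 then Real.sqrt (iteratedDerivWithin 2 φ (Icc (-1:ℝ) 1) 0)
    else f x / cov φ x with hgdef
  have hcov0 : cov φ 0 = 0 := by simp [cov, Real.sign_zero]
  have hcov_pos : ∀ x : ℝ, 0 < x → cov φ x = Real.sqrt (2 * φ x) := fun x hx => by
    rw [cov, Real.sign_of_pos hx, one_mul]
  have hcov_neg : ∀ x : ℝ, x < 0 → cov φ x = -Real.sqrt (2 * φ x) := fun x hx => by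
    rw [cov, Real.sign_of_neg hx]; ring
  have hcovne : ∀ x ∈ Icc (-1:ℝ) 1, x ≠ 0 → cov φ x ≠ 0 := by
    intro x hx hx0
    have h2φ := hφpos x hx hx0
    rcases lt_or_gt_of_ne hx0 with h | h
    · rw [hcov_neg x h]; simpa using (Real.sqrt_pos.mpr h2φ).ne'
    · rw [hcov_pos x h]; exact (Real.sqrt_pos.mpr h2φ).ne'
  have hyd : ∀ x ∈ Icc (-1:ℝ) 1, x ≠ 0 → HasDerivWithinAt (cov φ) (g x) (Icc (-1:ℝ) 1) x := by
    intro x hx hx0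
    have h2φ : 0 < 2 * φ x := hφpos x hx hx0
    have hsqx : 0 < Real.sqrt (2 * φ x) := Real.sqrt_pos.mpr h2φ
    have hmul : HasDerivWithinAt (fun t => 2 * φ t) (2 * f x) (Icc (-1:ℝ) 1) x :=
      ((hφd x hx).hasDerivWithinAt).const_mul 2
    have hs : HasDerivWithinAt (fun t => Real.sqrt (2 * φ t))
        (1 / (2 * Real.sqrt (2 * φ x)) * (2 * f x)) (Icc (-1:ℝ) 1) x := by
      simpa only [Function.comp_def] using
        (Real.hasDerivAt_sqrt h2φ.ne').comp_hasDerivWithinAt x hmul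
    rcases lt_or_gt_of_ne hx0 with h | h
    · have hev : cov φ =ᶠ[𝓝[Icc (-1:ℝ) 1] x] (fun t => -Real.sqrt (2 * φ t)) := by
        filter_upwards [mem_nhdsWithin_of_mem_nhds (Iio_mem_nhds h)] with t ht
        exact hcov_neg t ht
      have hres := hs.neg.congr_of_eventuallyEq hev (hcov_neg x h)
      refine hres.congr_deriv (Eq.symm ?_)
      rw [hgdef]; simp only [if_neg hx0, hcov_neg x h]
      obtain ⟨S, hSpos, hSeq⟩ : ∃ S : ℝ, 0 < S ∧ Real.sqrt (2*φ x) = S := ⟨_, hsqx, rfl⟩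
      have hS0 : S ≠ 0 := hSpos.ne'
      rw [hSeq, div_neg]
      congr 1
      field_simp
    · have hev : cov φ =ᶠ[𝓝[Icc (-1:ℝ) 1] x] (fun t => Real.sqrt (2 * φ t)) := by
        filter_upwards [mem_nhdsWithin_of_mem_nhds (Ioi_mem_nhds h)] with t ht
        exact hcov_pos t ht
      have hres := hs.congr_of_eventuallyEq hev (hcov_pos x h)
      refine hres.congr_deriv (Eq.symm ?_)
      rw [hgdef]; simp only [if_neg hx0, hcov_pos x h]
      obtain ⟨S, hSpos, hSeq⟩ : ∃ S : ℝ, 0 < S ∧ Real.sqrt (2*φ x) = S := ⟨_, hsqx, rfl⟩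
      have hS0 : S ≠ 0 := hSpos.ne'
      rw [hSeq]
      field_simp
  have hgb : ∀ x ∈ Icc (-1:ℝ) 1, 1/32 ≤ g x ∧ g x ≤ 32 := by
    intro x hx
    rcases eq_or_ne x 0 with rfl | hx0
    · rw [hgdef]; simp only [if_pos rfl]
      have h20 := h2 0 h0I
      constructor
      · have he : (1/32:ℝ) = Real.sqrt ((1/32)^2) := (Real.sqrt_sq (by norm_num)).symm
        rw [he]
        apply Real.sqrt_le_sqrt; nlinarith [h20.1]
      · have he : (32:ℝ) = Real.sqrt (32^2) := (Real.sqrt_sq (by norm_num)).symm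
        rw [he]
        apply Real.sqrt_le_sqrt; nlinarith [h20.2]
    · have hq := hφq x hx
      rcases lt_or_gt_of_ne hx0 with h | h
      · have hu := hfneg x hx h.le
        have hb := div_sqrt_bounds (s := -x) (u := -f x) (v := 2*φ x) (by linarith)
          (by linarith [hu.2]) (by linarith [hu.1]) (by nlinarith [hq.1]) (by nlinarith [hq.2])
        rw [hgdef]; simp only [if_neg hx0, hcov_neg x h]
        rw [div_neg, ← neg_div]
        exact hb
      · have hu := hfpos x hx h.le
        have hb := div_sqrt_bounds (s := x) (u := f x) (v := 2*φ x) h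
          (by linarith [hu.1]) (by linarith [hu.2]) (by nlinarith [hq.1]) (by nlinarith [hq.2])
        rw [hgdef]; simp only [if_neg hx0, hcov_pos x h]
        exact hb
  have hgpos : ∀ x ∈ Icc (-1:ℝ) 1, 0 < g x := fun x hx =>
    lt_of_lt_of_le (by norm_num) (hgb x hx).1
  -- limits at 0
  have h0Ioo : (0:ℝ) ∈ Ioo (-1:ℝ) 1 := by constructor <;> norm_num
  set K := iteratedDerivWithin 2 φ (Icc (-1:ℝ) 1) 0 with hKdef
  have hKpos : 0 < K := lt_of_lt_of_le (by norm_num) (h2 0 h0I).1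
  have hsqKpos : 0 < Real.sqrt K := Real.sqrt_pos.mpr hKpos
  have hf0 : HasDerivAt f K 0 := by
    have hh := hdf 0 h0Ioo
    rwa [hD2 0 h0I] at hh
  have L1 : Tendsto (fun t => f t / t) (𝓝[≠] (0:ℝ)) (𝓝 K) := by
    have hh := hasDerivAt_iff_tendsto_slope.mp hf0
    exact hh.congr fun t => by rw [slope_def_field, h1, sub_zero, sub_zero]
  have hφat0 : Tendsto φ (𝓝[≠] (0:ℝ)) (𝓝 0) := by
    have hh := (hdφ 0 h0Ioo).continuousAt.tendsto
    rw [h0] at hh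
    exact hh.mono_left nhdsWithin_le_nhds
  have hIoo0 : Ioo (-1:ℝ) 1 ∈ 𝓝 (0:ℝ) := Ioo_mem_nhds (by norm_num) (by norm_num)
  have L2 : Tendsto (fun t => φ t / (t^2/2)) (𝓝[≠] (0:ℝ)) (𝓝 K) := by
    have hev1 : ∀ᶠ t in 𝓝[≠] (0:ℝ), HasDerivAt φ (f t) t := by
      filter_upwards [mem_nhdsWithin_of_mem_nhds hIoo0] with t ht
      exact hdφ t ht
    have hev2 : ∀ᶠ t in 𝓝[≠] (0:ℝ), HasDerivAt (fun u : ℝ => u^2/2) t t := by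
      filter_upwards with t
      simpa using (hasDerivAt_pow 2 t).div_const 2
    have hev3 : ∀ᶠ t in 𝓝[≠] (0:ℝ), (t:ℝ) ≠ 0 := eventually_mem_nhdsWithin
    have hga : Tendsto (fun t : ℝ => t^2/2) (𝓝[≠] (0:ℝ)) (𝓝 0) := by
      have hh : Tendsto (fun t : ℝ => t^2/2) (𝓝 (0:ℝ)) (𝓝 ((0:ℝ)^2/2)) :=
        (((continuous_pow 2).div_const 2).tendsto 0)
      simp only [ne_eq, OfNat.ofNat_ne_zero, not_false_eq_true, zero_pow, zero_div] at hh
      exact hh.mono_left nhdsWithin_le_nhds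
    exact HasDerivAt.lhopital_zero_nhdsNE hev1 hev2 hev3 hφat0 hga L1
  have L3 : Tendsto (fun t => cov φ t / t) (𝓝[≠] (0:ℝ)) (𝓝 (Real.sqrt K)) := by
    have hsq : Tendsto (fun t => Real.sqrt (φ t/(t^2/2))) (𝓝[≠] (0:ℝ)) (𝓝 (Real.sqrt K)) :=
      (Real.continuous_sqrt.tendsto K).comp L2
    apply hsq.congr'
    filter_upwards [mem_nhdsWithin_of_mem_nhds hIoo0, eventually_mem_nhdsWithin] with t ht ht0
    have ht0' : (t:ℝ) ≠ 0 := ht0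
    have hφt : 0 < 2 * φ t := hφpos t (Ioo_subset_Icc_self ht) ht0'
    have he1 : φ t / (t^2/2) = 2*φ t / t^2 := by ring
    have he2 : Real.sqrt (2*φ t / t^2) = Real.sqrt (2*φ t) / |t| := by
      rw [Real.sqrt_div hφt.le, Real.sqrt_sq_eq_abs]
      all_goals positivity
    rw [he1, he2]
    rcases lt_or_gt_of_ne ht0' with h | h
    · rw [hcov_neg t h, abs_of_neg h, div_neg, neg_div]
    · rw [hcov_pos t h, abs_of_pos h]
  have KEY : Tendsto (fun t => f t / cov φ t) (𝓝[≠] (0:ℝ)) (𝓝 (Real.sqrt K)) := by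
    have hdiv := L1.div L3 hsqKpos.ne'
    have hval : K / Real.sqrt K = Real.sqrt K := Real.div_sqrt
    rw [hval] at hdiv
    apply hdiv.congr'
    filter_upwards [mem_nhdsWithin_of_mem_nhds hIoo0, eventually_mem_nhdsWithin] with t ht ht0
    have ht0' : (t:ℝ) ≠ 0 := ht0
    have hc : cov φ t ≠ 0 := hcovne t (Ioo_subset_Icc_self ht) ht0'
    simp only [Pi.div_apply]
    field_simp
  have hg0 : g 0 = Real.sqrt K := by rw [hgdef]; simp
  have hgc : ContinuousOn g (Icc (-1:ℝ) 1) := by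
    intro x hx
    rcases eq_or_ne x 0 with rfl | hx0
    · rw [← continuousWithinAt_diff_self]
      have hle : 𝓝[Icc (-1:ℝ) 1 \ {0}] (0:ℝ) ≤ 𝓝[≠] (0:ℝ) :=
        nhdsWithin_mono 0 fun t ht => ht.2
      rw [ContinuousWithinAt, hg0]
      apply Tendsto.congr' _ (KEY.mono_left hle)
      filter_upwards [eventually_mem_nhdsWithin] with t ht
      rw [hgdef]; simp only [if_neg (show t ≠ 0 from ht.2)]
    · have hcv : ContinuousWithinAt (cov φ) (Icc (-1:ℝ) 1) x := (hyd x hx hx0).continuousWithinAt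
      have hcf : ContinuousWithinAt f (Icc (-1:ℝ) 1) x := hfc x hx
      have hbase := hcf.div hcv (hcovne x hx hx0)
      apply hbase.congr_of_eventuallyEq _ (by rw [hgdef]; simp only [if_neg hx0, Pi.div_apply])
      filter_upwards [mem_nhdsWithin_of_mem_nhds (isOpen_compl_singleton.mem_nhds hx0)] with t ht
      rw [hgdef]; simp only [if_neg (show t ≠ 0 from ht), Pi.div_apply]
  have hy0 : HasDerivAt (cov φ) (g 0) 0 := by
    rw [hg0, hasDerivAt_iff_tendsto_slope]
    exact L3.congr fun t => by rw [slope_def_field, hcov0, sub_zero, sub_zero]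
  have hydI : ∀ x ∈ Icc (-1:ℝ) 1, HasDerivWithinAt (cov φ) (g x) (Icc (-1:ℝ) 1) x := by
    intro x hx
    rcases eq_or_ne x 0 with rfl | hx0
    · exact hy0.hasDerivWithinAt
    · exact hyd x hx hx0
  have hyAt : ∀ x ∈ Ioo (-1:ℝ) 1, HasDerivAt (cov φ) (g x) x := fun x hx =>
    (hydI x (Ioo_subset_Icc_self hx)).hasDerivAt (hmemI x hx)
  have hyDiff : DifferentiableOn ℝ (cov φ) (Icc (-1:ℝ) 1) := fun x hx =>
    (hydI x hx).differentiableWithinAt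
  have hycont : ContinuousOn (cov φ) (Icc (-1:ℝ) 1) := hyDiff.continuousOn
  have hydw : ∀ x ∈ Icc (-1:ℝ) 1, derivWithin (cov φ) (Icc (-1:ℝ) 1) x = g x := fun x hx =>
    (hydI x hx).derivWithin (hIu x hx)
  have hyC1 : ContDiffOn ℝ 1 (cov φ) (Icc (-1:ℝ) 1) := by
    have hres := (contDiffOn_succ_iff_derivWithin (n := 0) hIu).2
      ⟨hyDiff, by simp, by rw [contDiffOn_zero]; exact hgc.congr hydw⟩
    simpa using hres
  have hmono : StrictMonoOn (cov φ) (Icc (-1:ℝ) 1) := by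
    apply strictMonoOn_of_deriv_pos (convex_Icc _ _) hycont
    intro x hx
    rw [interior_Icc] at hx
    rw [(hyAt x hx).deriv]
    exact hgpos x (Ioo_subset_Icc_self hx)
  -- endpoints and bijection
  have hm1I : (-1:ℝ) ∈ Icc (-1:ℝ) 1 := ⟨le_refl _, by norm_num⟩
  have h1I : (1:ℝ) ∈ Icc (-1:ℝ) 1 := ⟨by norm_num, le_refl _⟩
  set a := cov φ (-1) with hadef
  set b := cov φ 1 with hbdef
  have ha0 : a < 0 := by
    have hh := hmono hm1I h0I (by norm_num)
    rwa [hcov0] at hh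
  have hb0 : 0 < b := by
    have hh := hmono h0I h1I (by norm_num)
    rwa [hcov0] at hh
  have hab : a < b := ha0.trans hb0
  have hJu : UniqueDiffOn ℝ (Icc a b) := uniqueDiffOn_Icc hab
  have hmapsTo : MapsTo (cov φ) (Icc (-1:ℝ) 1) (Icc a b) := fun x hx =>
    ⟨hmono.monotoneOn hm1I hx hx.1, hmono.monotoneOn hx h1I hx.2⟩
  have hsurj : SurjOn (cov φ) (Icc (-1:ℝ) 1) (Icc a b) :=
    intermediate_value_Icc (by norm_num) hycont
  have hbij : BijOn (cov φ) (Icc (-1:ℝ) 1) (Icc a b) := ⟨hmapsTo, hmono.injOn, hsurj⟩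
  set xinv := Function.invFunOn (cov φ) (Icc (-1:ℝ) 1) with hxidef
  have hInv : InvOn xinv (cov φ) (Icc (-1:ℝ) 1) (Icc a b) := hbij.invOn_invFunOn
  have hbij' : BijOn xinv (Icc a b) (Icc (-1:ℝ) 1) := Set.BijOn.symm hInv.symm hbij
  have hxiMem : ∀ z ∈ Icc a b, xinv z ∈ Icc (-1:ℝ) 1 := fun z hz => hbij'.mapsTo hz
  have hyxi : ∀ x ∈ Icc (-1:ℝ) 1, xinv (cov φ x) = x := fun x hx => hInv.1 hx
  have hxiy : ∀ z ∈ Icc a b, cov φ (xinv z) = z := fun z hz => hInv.2 hz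
  have hxia : xinv a = -1 := by rw [hadef]; exact hyxi _ hm1I
  have hxib : xinv b = 1 := by rw [hbdef]; exact hyxi _ h1I
  have hxi0 : xinv 0 = 0 := by
    have hh := hyxi 0 h0I
    rwa [hcov0] at hh
  have hximono : StrictMonoOn xinv (Icc a b) := by
    intro z hz w hw hzw
    by_contra hle
    push_neg at hle
    have hh := hmono.monotoneOn (hxiMem w hw) (hxiMem z hz) hle
    rw [hxiy z hz, hxiy w hw] at hh
    exact absurd hh (not_le.mpr hzw)
  have hxilt1 : ∀ z ∈ Icc a b, z < b → xinv z < 1 := by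
    intro z hz hzb
    rcases lt_or_eq_of_le (hxiMem z hz).2 with h | h
    · exact h
    · exfalso
      have hzz := hxiy z hz
      rw [h] at hzz
      rw [← hzz, ← hbdef] at hzb
      exact lt_irrefl _ hzb
  have hxigt1 : ∀ z ∈ Icc a b, a < z → -1 < xinv z := by
    intro z hz hza
    rcases lt_or_eq_of_le (hxiMem z hz).1 with h | h
    · exact h
    · exfalso
      have hzz := hxiy z hz
      rw [← h] at hzz
      rw [← hzz, ← hadef] at hza
      exact lt_irrefl _ hza
  have hxiR : ∀ z ∈ Ico a b, ContinuousWithinAt xinv (Ici z) z := by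
    intro z hz
    apply hximono.continuousWithinAt_right_of_exists_between (Icc_mem_nhdsGE_of_mem hz)
    intro w hw
    have hxz1 : xinv z < 1 := hxilt1 z (Ico_subset_Icc_self hz) hz.2
    have hm : min w 1 ∈ Icc (-1:ℝ) 1 := by
      constructor
      · apply le_min
        · linarith [(hxiMem z (Ico_subset_Icc_self hz)).1, hw]
        · norm_num
      · exact min_le_right _ _
    refine ⟨cov φ (min w 1), hmapsTo hm, ?_⟩
    rw [hyxi _ hm]
    exact ⟨lt_min hw hxz1, min_le_left _ _⟩
  have hxiL : ∀ z ∈ Ioc a b, ContinuousWithinAt xinv (Iic z) z := by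
    intro z hz
    apply hximono.continuousWithinAt_left_of_exists_between (Icc_mem_nhdsLE_of_mem hz)
    intro w hw
    have hxz1 : -1 < xinv z := hxigt1 z (Ioc_subset_Icc_self hz) hz.1
    have hm : max w (-1) ∈ Icc (-1:ℝ) 1 := by
      constructor
      · exact le_max_right _ _
      · apply max_le
        · linarith [(hxiMem z (Ioc_subset_Icc_self hz)).2, hw]
        · norm_num
    refine ⟨cov φ (max w (-1)), hmapsTo hm, ?_⟩
    rw [hyxi _ hm]
    exact ⟨le_max_left _ _, max_lt hw hxz1⟩
  have hxicont : ContinuousOn xinv (Icc a b) := by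
    intro z hz
    rcases eq_or_lt_of_le hz.1 with rfl | hza
    · exact (hxiR a ⟨le_refl _, hab⟩).mono Icc_subset_Ici_self
    · rcases eq_or_lt_of_le hz.2 with rfl | hzb
      · exact (hxiL b ⟨hza, le_refl _⟩).mono Icc_subset_Iic_self
      · exact ((hxiL z ⟨hza, hz.2⟩).union (hxiR z ⟨hz.1, hzb⟩)).mono
          (fun w _ => (le_total w z).elim (fun h => Or.inl h) (fun h => Or.inr h))
  have hxiCAt : ∀ z ∈ Ioo a b, ContinuousAt xinv z := fun z hz =>
    continuousAt_iff_continuous_left_right.mpr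
      ⟨hxiL z ⟨hz.1, hz.2.le⟩, hxiR z ⟨hz.1.le, hz.2⟩⟩
  have hxiIoo : ∀ z ∈ Ioo a b, xinv z ∈ Ioo (-1:ℝ) 1 := fun z hz =>
    ⟨hxigt1 z (Ioo_subset_Icc_self hz) hz.1, hxilt1 z (Ioo_subset_Icc_self hz) hz.2⟩
  have hxi_int : ∀ z ∈ Ioo a b, HasDerivAt xinv (g (xinv z))⁻¹ z := by
    intro z hz
    have hx := hxiIoo z hz
    have hcv : HasDerivAt (cov φ) (g (xinv z)) (xinv z) := hyAt (xinv z) hx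
    apply HasDerivAt.of_local_left_inverse (hxiCAt z hz) hcv
      (hgpos _ (Ioo_subset_Icc_self hx)).ne'
    filter_upwards [Icc_mem_nhds hz.1 hz.2] with w hw
    exact hxiy w hw
  have hxiDiffIoo : DifferentiableOn ℝ xinv (Ioo a b) := fun z hz =>
    ((hxi_int z hz).differentiableAt).differentiableWithinAt
  have hcca : ContinuousWithinAt xinv (Icc a b) a := hxicont a (left_mem_Icc.mpr hab.le)
  have hccb : ContinuousWithinAt xinv (Icc a b) b := hxicont b (right_mem_Icc.mpr hab.le)
  have hgtend : ∀ x0 ∈ Icc (-1:ℝ) 1, ∀ z0 : ℝ, Tendsto xinv (𝓝[Icc a b] z0) (𝓝 x0) →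
      Tendsto (fun w => (g (xinv w))⁻¹) (𝓝[Ioo a b] z0) (𝓝 (g x0)⁻¹) := by
    intro x0 hx0 z0 ht
    have hxz : Tendsto xinv (𝓝[Ioo a b] z0) (𝓝[Icc (-1:ℝ) 1] x0) := by
      rw [tendsto_nhdsWithin_iff]
      constructor
      · exact ht.mono_left (nhdsWithin_mono _ Ioo_subset_Icc_self)
      · filter_upwards [self_mem_nhdsWithin] with w hw
        exact hxiMem w (Ioo_subset_Icc_self hw)
    exact ((hgc x0 hx0).tendsto.comp hxz).inv₀ (hgpos x0 hx0).ne'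
  have henda : HasDerivWithinAt xinv (g (-1:ℝ))⁻¹ (Ici a) a := by
    apply hasDerivWithinAt_Ici_of_tendsto_deriv hxiDiffIoo
      (hcca.mono Ioo_subset_Icc_self)
      (Ioo_mem_nhdsGT_of_mem ⟨le_refl a, hab⟩)
    have hgt := hgtend (-1) hm1I a (by rw [ContinuousWithinAt, hxia] at hcca; exact hcca)
    rw [← nhdsWithin_Ioo_eq_nhdsGT hab]
    apply Tendsto.congr' _ hgt
    filter_upwards [self_mem_nhdsWithin] with w hw
    exact ((hxi_int w hw).deriv).symm
  have hendb : HasDerivWithinAt xinv (g (1:ℝ))⁻¹ (Iic b) b := by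
    apply hasDerivWithinAt_Iic_of_tendsto_deriv hxiDiffIoo
      (hccb.mono Ioo_subset_Icc_self)
      (Ioo_mem_nhdsLT_of_mem ⟨hab, le_refl b⟩)
    have hgt := hgtend 1 h1I b (by rw [ContinuousWithinAt, hxib] at hccb; exact hccb)
    rw [← nhdsWithin_Ioo_eq_nhdsLT hab]
    apply Tendsto.congr' _ hgt
    filter_upwards [self_mem_nhdsWithin] with w hw
    exact ((hxi_int w hw).deriv).symm
  have hxiD : ∀ z ∈ Icc a b, HasDerivWithinAt xinv (g (xinv z))⁻¹ (Icc a b) z := by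
    intro z hz
    rcases eq_or_lt_of_le hz.1 with rfl | hza
    · rw [hxia]
      exact henda.mono Icc_subset_Ici_self
    · rcases eq_or_lt_of_le hz.2 with rfl | hzb
      · rw [hxib]
        exact hendb.mono Icc_subset_Iic_self
      · exact (hxi_int z ⟨hza, hzb⟩).hasDerivWithinAt
  have hxdw : ∀ z ∈ Icc a b, derivWithin xinv (Icc a b) z = (g (xinv z))⁻¹ := fun z hz =>
    (hxiD z hz).derivWithin (hJu z hz)
  have hxiDiff : DifferentiableOn ℝ xinv (Icc a b) := fun z hz =>
    (hxiD z hz).differentiableWithinAt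
  have hxiC1 : ContDiffOn ℝ 1 xinv (Icc a b) := by
    have hres := (contDiffOn_succ_iff_derivWithin (n := 0) hJu).2
      ⟨hxiDiff, by simp, by
        rw [contDiffOn_zero]
        have hcont : ContinuousOn (fun z => (g (xinv z))⁻¹) (Icc a b) :=
          ((hgc.comp hxicont (fun z hz => hxiMem z hz)).inv₀
            (fun z hz => (hgpos _ (hxiMem z hz)).ne'))
        exact hcont.congr hxdw⟩
    simpa using hres
  have hfml : ∀ z ∈ Icc a b, z ≠ 0 → derivWithin xinv (Icc a b) z = z / f (xinv z) := by
    intro z hz hz0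
    rw [hxdw z hz]
    have hxz0 : xinv z ≠ 0 := by
      intro h
      apply hz0
      have hh := hxiy z hz
      rw [h, hcov0] at hh
      exact hh.symm
    have hgz : g (xinv z) = f (xinv z) / z := by
      rw [hgdef]
      simp only [if_neg hxz0, hxiy z hz]
    rw [hgz, inv_div]
  have h0J : (0:ℝ) ∈ Icc a b := ⟨ha0.le, hb0.le⟩
  have hat0 : derivWithin xinv (Icc a b) 0 = (Real.sqrt K)⁻¹ := by
    rw [hxdw 0 h0J, hxi0, hg0]
  have hbnd : ∀ z ∈ Icc a b,
      1/32 ≤ derivWithin xinv (Icc a b) z ∧ derivWithin xinv (Icc a b) z ≤ 32 := by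
    intro z hz
    rw [hxdw z hz]
    have hgb' := hgb (xinv z) (hxiMem z hz)
    have hgp := hgpos (xinv z) (hxiMem z hz)
    have h1d : (g (xinv z))⁻¹ = 1 / g (xinv z) := (one_div _).symm
    rw [h1d]
    constructor
    · rw [le_div_iff₀ hgp]
      linarith [hgb'.2]
    · rw [div_le_iff₀ hgp]
      linarith [hgb'.1]
  exact ⟨hmono, hyC1, hbij, xinv, hInv, hxiC1, hfml, hat0, hbnd⟩


/-- the change of variables `y(x) = sgn(x)·(2φ(x))^{1/2}` is a
strictly increasing `C¹` bijection of `[-1,1]` onto `[y(-1), y(1)]`, with `C¹`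
inverse whose derivative is `y/φ'(x(y))` for `y ≠ 0`, equals `φ''(0)^{-1/2}`
at `0`, and is bounded above and below by absolute constants. -/
theorem stmt3 :
    ∃ c C : ℝ, 0 < c ∧ c < C ∧
      ∀ φ : ℝ → ℝ,
        ContDiffOn ℝ 2 φ (Set.Icc (-1) 1) →
        φ 0 = 0 →
        derivWithin φ (Set.Icc (-1) 1) 0 = 0 →
        (∀ x ∈ Set.Icc (-1:ℝ) 1,
          1/10 ≤ iteratedDerivWithin 2 φ (Set.Icc (-1) 1) x ∧
            iteratedDerivWithin 2 φ (Set.Icc (-1) 1) x ≤ 10) →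
        StrictMonoOn (cov φ) (Set.Icc (-1) 1) ∧
        ContDiffOn ℝ 1 (cov φ) (Set.Icc (-1) 1) ∧
        Set.BijOn (cov φ) (Set.Icc (-1) 1) (Set.Icc (cov φ (-1)) (cov φ 1)) ∧
        ∃ xinv : ℝ → ℝ,
          Set.InvOn xinv (cov φ) (Set.Icc (-1) 1) (Set.Icc (cov φ (-1)) (cov φ 1)) ∧
          ContDiffOn ℝ 1 xinv (Set.Icc (cov φ (-1)) (cov φ 1)) ∧
          (∀ z ∈ Set.Icc (cov φ (-1)) (cov φ 1), z ≠ 0 →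
            derivWithin xinv (Set.Icc (cov φ (-1)) (cov φ 1)) z =
              z / derivWithin φ (Set.Icc (-1) 1) (xinv z)) ∧
          derivWithin xinv (Set.Icc (cov φ (-1)) (cov φ 1)) 0 =
            (Real.sqrt (iteratedDerivWithin 2 φ (Set.Icc (-1) 1) 0))⁻¹ ∧
          ∀ z ∈ Set.Icc (cov φ (-1)) (cov φ 1),
            c ≤ derivWithin xinv (Set.Icc (cov φ (-1)) (cov φ 1)) z ∧
              derivWithin xinv (Set.Icc (cov φ (-1)) (cov φ 1)) z ≤ C := by
  exact ⟨1/32, 32, by norm_num, by norm_num, covAux⟩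
end
end

section
/- Let k ≥ 2 be an integer and let φ be a real-valued C^{k+1} function on [−1,1] with φ(0) = φ′(0) = ⋯ = φ^{(k)}(0) = 0 and 1/10 ≤ φ^{(k+1)}(x) ≤ 10 for all |x| ≤ 1. Then the map y(x) = sgn(x)·|φ(x)|^{1/(k+1)} is a strictly increasing C¹ bijection from [−1,1] onto [y(−1), y(1)], its inverse x(y) is C¹ and satisfies x′(y) = (k+1) |φ(x(y))|^{k/(k+1)} / |φ′(x(y))| for y ≠ 0, there exist constants 0 < c_k < C_k depending only on k with c_k ≤ x′(y) ≤ C_k for all y, and x′(0) = ((k+1)!)^{1/(k+1)} φ^{(k+1)}(0)^{−1/(k+1)}. -/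
open Real Set Filter

noncomputable section

/-- The change of variables `y(x) = sgn(x) · |φ(x)|^{1/(k+1)}`. -/
noncomputable def covk (k : ℕ) (φ : ℝ → ℝ) : ℝ → ℝ :=
  fun x => Real.sign x * |φ x| ^ ((1:ℝ)/(k+1))

namespace Stmt9Aux

/-- comparison of endpoint values from nonneg derivative on the interior -/
lemma mono_cmp {u u' : ℝ → ℝ} {p q : ℝ} (hpq : p ≤ q)
    (hu : ContinuousOn u (Icc p q))
    (hd : ∀ t ∈ Ioo p q, HasDerivAt u (u' t) t)
    (h0 : ∀ t ∈ Ioo p q, 0 ≤ u' t) : u p ≤ u q := by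
  rcases eq_or_lt_of_le hpq with h | h
  · simp [h]
  · have := monotoneOn_of_hasDerivWithinAt_nonneg (convex_Icc p q) hu
      (f' := u') (fun t ht => by
        rw [interior_Icc] at ht ⊢
        exact (hd t ht).hasDerivWithinAt)
      (fun t ht => by rw [interior_Icc] at ht; exact h0 t ht)
    exact this (left_mem_Icc.2 hpq) (right_mem_Icc.2 hpq) hpq

lemma poly_hasDerivAt (a : ℝ) (d : ℕ) (t : ℝ) :
    HasDerivAt (fun s => a * s ^ (d+1) / ((d+1).factorial : ℝ)) (a * t ^ d / (d.factorial : ℝ)) t := by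
  have h := (hasDerivAt_pow (d+1) t).const_mul a
  have h2 := h.div_const ((d+1).factorial : ℝ)
  refine h2.congr_deriv (Eq.symm ?_)
  have hd : ((d.factorial : ℝ)) ≠ 0 := by positivity
  have hd1 : (((d+1).factorial : ℝ)) ≠ 0 := by positivity
  rw [Nat.factorial_succ]
  simp only [Nat.add_sub_cancel]
  push_cast
  field_simp

/-- integrate a derivative inequality over `[p,q] ⊆ [-1,1]`:
if `h' ≤ g'` on `[p,q]` then `h q - h p ≤ g q - g p`. -/
lemma integrate_le {g g' : ℝ → ℝ}
    (hgc : ContinuousOn g (Icc (-1:ℝ) 1))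
    (hgd : ∀ t ∈ Icc (-1:ℝ) 1, HasDerivWithinAt g (g' t) (Icc (-1:ℝ) 1) t)
    {h h' : ℝ → ℝ} (hh : ∀ t, HasDerivAt h (h' t) t) (hhc : Continuous h)
    {p q : ℝ} (hpq : p ≤ q) (hsub : Icc p q ⊆ Icc (-1:ℝ) 1)
    (hle : ∀ t ∈ Icc p q, h' t ≤ g' t) : h q - h p ≤ g q - g p := by
  have key : (fun t => g t - h t) p ≤ (fun t => g t - h t) q := by
    apply mono_cmp (u' := fun t => g' t - h' t) hpq
    · exact (hgc.mono hsub).sub hhc.continuousOn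
    · intro t ht
      have htS : t ∈ Icc (-1:ℝ) 1 := hsub (Ioo_subset_Icc_self ht)
      have hmem : Icc (-1:ℝ) 1 ∈ nhds t := by
        apply Icc_mem_nhds
        · linarith [ht.1, (hsub (left_mem_Icc.2 hpq)).1]
        · linarith [ht.2, (hsub (right_mem_Icc.2 hpq)).2]
      exact ((hgd t htS).hasDerivAt hmem).sub (hh t)
    · intro t ht
      have := hle t (Ioo_subset_Icc_self ht)
      linarith
  simp only at key
  linarith

end Stmt9Aux

namespace Stmt9Aux2
open Stmt9Aux

lemma integrate_ge {g g' : ℝ → ℝ}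
    (hgc : ContinuousOn g (Icc (-1:ℝ) 1))
    (hgd : ∀ t ∈ Icc (-1:ℝ) 1, HasDerivWithinAt g (g' t) (Icc (-1:ℝ) 1) t)
    {h h' : ℝ → ℝ} (hh : ∀ t, HasDerivAt h (h' t) t) (hhc : Continuous h)
    {p q : ℝ} (hpq : p ≤ q) (hsub : Icc p q ⊆ Icc (-1:ℝ) 1)
    (hle : ∀ t ∈ Icc p q, g' t ≤ h' t) : g q - g p ≤ h q - h p := by
  have key : (fun t => h t - g t) p ≤ (fun t => h t - g t) q := by
    apply mono_cmp (u' := fun t => h' t - g' t) hpq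
    · exact hhc.continuousOn.sub (hgc.mono hsub)
    · intro t ht
      have htS : t ∈ Icc (-1:ℝ) 1 := hsub (Ioo_subset_Icc_self ht)
      have hmem : Icc (-1:ℝ) 1 ∈ nhds t := by
        apply Icc_mem_nhds
        · linarith [ht.1, (hsub (left_mem_Icc.2 hpq)).1]
        · linarith [ht.2, (hsub (right_mem_Icc.2 hpq)).2]
      exact (hh t).sub ((hgd t htS).hasDerivAt hmem)
    · intro t ht
      have := hle t (Ioo_subset_Icc_self ht)
      linarith
  simp only at key
  linarith

lemma poly_cont (a : ℝ) (d : ℕ) :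
    Continuous (fun s : ℝ => a * s ^ (d+1) / ((d+1).factorial : ℝ)) :=
  ((continuous_const.mul (continuous_pow (d+1))).div_const _)

lemma integrate {g g' : ℝ → ℝ} {a b : ℝ} {d : ℕ} {x : ℝ}
    (hx : x ∈ Icc (-1:ℝ) 1) (hg0 : g 0 = 0)
    (hgc : ContinuousOn g (Icc (-1:ℝ) 1))
    (hgd : ∀ t ∈ Icc (-1:ℝ) 1, HasDerivWithinAt g (g' t) (Icc (-1:ℝ) 1) t)
    (hab : a ≤ b)
    (hb : ∀ t ∈ uIcc (0:ℝ) x,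
      g' t ∈ uIcc (a * t ^ d / (d.factorial : ℝ)) (b * t ^ d / (d.factorial : ℝ))) :
    g x ∈ uIcc (a * x ^ (d+1) / ((d+1).factorial : ℝ))
      (b * x ^ (d+1) / ((d+1).factorial : ℝ)) := by
  have hdpos : (0:ℝ) < (d.factorial : ℝ) := by positivity
  rcases le_total 0 x with hx0 | hx0
  · have hsub : Icc (0:ℝ) x ⊆ Icc (-1:ℝ) 1 := Icc_subset_Icc (by norm_num) hx.2
    have hbnd : ∀ t ∈ Icc (0:ℝ) x,
        a * t ^ d / (d.factorial : ℝ) ≤ g' t ∧ g' t ≤ b * t ^ d / (d.factorial : ℝ) := by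
      intro t ht
      have htp : (0:ℝ) ≤ t ^ d := pow_nonneg ht.1 d
      have h1 : a * t ^ d / (d.factorial : ℝ) ≤ b * t ^ d / (d.factorial : ℝ) := by
        gcongr
      have := hb t (by rwa [uIcc_of_le hx0])
      rwa [uIcc_of_le h1, mem_Icc] at this
    have hlow := integrate_le hgc hgd (fun t => poly_hasDerivAt a d t) (poly_cont a d)
      hx0 hsub (fun t ht => (hbnd t ht).1)
    have hhigh := integrate_ge hgc hgd (fun t => poly_hasDerivAt b d t) (poly_cont b d)
      hx0 hsub (fun t ht => (hbnd t ht).2)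
    simp only [zero_pow (Nat.succ_ne_zero d), mul_zero, zero_div, hg0, sub_zero] at hlow hhigh
    have hord : a * x ^ (d+1) / ((d+1).factorial : ℝ) ≤ b * x ^ (d+1) / ((d+1).factorial : ℝ) := by
      have : (0:ℝ) ≤ x ^ (d+1) := pow_nonneg hx0 _
      gcongr
    rw [uIcc_of_le hord, mem_Icc]
    exact ⟨hlow, hhigh⟩
  · have hsub : Icc x (0:ℝ) ⊆ Icc (-1:ℝ) 1 := Icc_subset_Icc hx.1 (by norm_num)
    have huicc : uIcc (0:ℝ) x = Icc x 0 := by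
      rw [uIcc_comm, uIcc_of_le hx0]
    rcases Nat.even_or_odd d with hev | hod
    · -- d even : t^d ≥ 0
      have hbnd : ∀ t ∈ Icc x (0:ℝ),
          a * t ^ d / (d.factorial : ℝ) ≤ g' t ∧ g' t ≤ b * t ^ d / (d.factorial : ℝ) := by
        intro t ht
        have htp : (0:ℝ) ≤ t ^ d := hev.pow_nonneg t
        have h1 : a * t ^ d / (d.factorial : ℝ) ≤ b * t ^ d / (d.factorial : ℝ) := by gcongr
        have := hb t (by rwa [huicc])
        rwa [uIcc_of_le h1, mem_Icc] at this
      have hlow := integrate_le hgc hgd (fun t => poly_hasDerivAt a d t) (poly_cont a d)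
        hx0 hsub (fun t ht => (hbnd t ht).1)
      have hhigh := integrate_ge hgc hgd (fun t => poly_hasDerivAt b d t) (poly_cont b d)
        hx0 hsub (fun t ht => (hbnd t ht).2)
      simp only [zero_pow (Nat.succ_ne_zero d), mul_zero, zero_div, hg0, zero_sub] at hlow hhigh
      rw [mem_uIcc]
      right
      constructor <;> linarith
    · -- d odd : t^d ≤ 0 on [x,0]
      have hbnd : ∀ t ∈ Icc x (0:ℝ),
          b * t ^ d / (d.factorial : ℝ) ≤ g' t ∧ g' t ≤ a * t ^ d / (d.factorial : ℝ) := by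
        intro t ht
        have htp : t ^ d ≤ 0 := hod.pow_nonpos ht.2
        have h1 : b * t ^ d / (d.factorial : ℝ) ≤ a * t ^ d / (d.factorial : ℝ) := by
          have h3 : b * t ^ d ≤ a * t ^ d := mul_le_mul_of_nonpos_right hab htp
          exact (div_le_div_iff_of_pos_right hdpos).2 h3
        have := hb t (by rwa [huicc])
        rw [uIcc_comm, uIcc_of_le h1, mem_Icc] at this
        exact this
      have hlow := integrate_le hgc hgd (fun t => poly_hasDerivAt b d t) (poly_cont b d)
        hx0 hsub (fun t ht => (hbnd t ht).1)
      have hhigh := integrate_ge hgc hgd (fun t => poly_hasDerivAt a d t) (poly_cont a d)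
        hx0 hsub (fun t ht => (hbnd t ht).2)
      simp only [zero_pow (Nat.succ_ne_zero d), mul_zero, zero_div, hg0, zero_sub] at hlow hhigh
      rw [mem_uIcc]
      left
      constructor <;> linarith

end Stmt9Aux2

namespace Stmt9Main
open Stmt9Aux Stmt9Aux2

variable {k : ℕ} {φ : ℝ → ℝ}

lemma uS : UniqueDiffOn ℝ (Icc (-1:ℝ) 1) := uniqueDiffOn_Icc (by norm_num)

lemma hS0 : (0:ℝ) ∈ Icc (-1:ℝ) 1 := by norm_num

lemma Fcont (hφ : ContDiffOn ℝ (k+1) φ (Icc (-1:ℝ) 1)) {j : ℕ} (hj : j ≤ k+1) :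
    ContinuousOn (iteratedDerivWithin j φ (Icc (-1:ℝ) 1)) (Icc (-1:ℝ) 1) :=
  hφ.continuousOn_iteratedDerivWithin (by exact_mod_cast hj) uS

lemma Fderiv (hφ : ContDiffOn ℝ (k+1) φ (Icc (-1:ℝ) 1)) {j : ℕ} (hj : j ≤ k) :
    ∀ t ∈ Icc (-1:ℝ) 1, HasDerivWithinAt (iteratedDerivWithin j φ (Icc (-1:ℝ) 1))
      (iteratedDerivWithin (j+1) φ (Icc (-1:ℝ) 1) t) (Icc (-1:ℝ) 1) t := by
  intro t ht
  have hlt : (j : WithTop ℕ∞) < ((k+1 : ℕ) : WithTop ℕ∞) := by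
    exact_mod_cast Nat.lt_succ_of_le hj
  have hdiff : DifferentiableWithinAt ℝ (iteratedDerivWithin j φ (Icc (-1:ℝ) 1))
      (Icc (-1:ℝ) 1) t := (hφ.differentiableOn_iteratedDerivWithin hlt uS) t ht
  have := hdiff.hasDerivWithinAt
  rwa [← iteratedDerivWithin_succ] at this

lemma sandwich (hφ : ContDiffOn ℝ (k+1) φ (Icc (-1:ℝ) 1))
    (hzero : ∀ j ≤ k, iteratedDerivWithin j φ (Icc (-1:ℝ) 1) 0 = 0)
    {m M x : ℝ} (hx : x ∈ Icc (-1:ℝ) 1) (hmM : m ≤ M)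
    (hb : ∀ t ∈ uIcc (0:ℝ) x, iteratedDerivWithin (k+1) φ (Icc (-1:ℝ) 1) t ∈ Icc m M) :
    ∀ d, d ≤ k+1 → ∀ t ∈ uIcc (0:ℝ) x,
      iteratedDerivWithin (k+1-d) φ (Icc (-1:ℝ) 1) t ∈
        uIcc (m * t ^ d / (d.factorial : ℝ)) (M * t ^ d / (d.factorial : ℝ)) := by
  have hsub : uIcc (0:ℝ) x ⊆ Icc (-1:ℝ) 1 := (ordConnected_Icc).uIcc_subset hS0 hx
  intro d
  induction d with
  | zero =>
    intro _ t ht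
    simp only [Nat.sub_zero, pow_zero, mul_one, Nat.factorial_zero, Nat.cast_one, div_one]
    rw [uIcc_of_le hmM]
    exact hb t ht
  | succ d ih =>
    intro hd t ht
    have hjk : k+1-(d+1) ≤ k := by omega
    have heq : k+1-d = (k+1-(d+1))+1 := by omega
    have hres := integrate (g := iteratedDerivWithin (k+1-(d+1)) φ (Icc (-1:ℝ) 1))
      (g' := iteratedDerivWithin (k+1-d) φ (Icc (-1:ℝ) 1))
      (a := m) (b := M) (d := d) (x := t)
      (hsub ht) (hzero _ hjk) (Fcont hφ (by omega))
      (by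
        intro s hs
        have := Fderiv hφ hjk s hs
        rwa [← heq] at this)
      hmM
      (by
        intro s hs
        have hsx : s ∈ uIcc (0:ℝ) x := uIcc_subset_uIcc left_mem_uIcc ht hs
        exact ih (by omega) s hsx)
    exact hres

lemma extract {z c m M : ℝ} (hm : 0 < m) (hmM : m ≤ M)
    (hz : z ∈ uIcc (m * c) (M * c)) :
    m * |c| ≤ |z| ∧ |z| ≤ M * |c| ∧ (0 < c → 0 < z) ∧ (c < 0 → z < 0) := by
  rw [mem_uIcc] at hz
  rcases le_or_gt 0 c with hc | hc
  · have hmc : m * c ≤ M * c := by nlinarith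
    have h1 : m * c ≤ z ∧ z ≤ M * c := by
      rcases hz with h | h
      · exact h
      · exact ⟨hmc.trans h.1, h.2.trans hmc⟩
    have hz0 : 0 ≤ z := le_trans (by positivity) h1.1
    rw [abs_of_nonneg hc, abs_of_nonneg hz0]
    refine ⟨h1.1, h1.2, fun hcp => lt_of_lt_of_le (by positivity) h1.1,
      fun hcn => absurd hcn (not_lt.2 hc)⟩
  · have hmc : M * c ≤ m * c := by nlinarith
    have h1 : M * c ≤ z ∧ z ≤ m * c := by
      rcases hz with h | h
      · exact ⟨hmc.trans h.1, h.2.trans hmc⟩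
      · exact h
    have hz0 : z < 0 := lt_of_le_of_lt h1.2 (by nlinarith)
    rw [abs_of_neg hc, abs_of_neg hz0]
    constructor
    · linarith [h1.2]
    · refine ⟨by linarith [h1.1], fun hcp => absurd hcp (not_lt.2 hc.le), fun _ => hz0⟩

lemma bounds_gen (hφ : ContDiffOn ℝ (k+1) φ (Icc (-1:ℝ) 1))
    (hzero : ∀ j ≤ k, iteratedDerivWithin j φ (Icc (-1:ℝ) 1) 0 = 0)
    {m M x : ℝ} (hm : 0 < m) (hmM : m ≤ M) (hx : x ∈ Icc (-1:ℝ) 1)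
    (hb : ∀ t ∈ uIcc (0:ℝ) x, iteratedDerivWithin (k+1) φ (Icc (-1:ℝ) 1) t ∈ Icc m M) :
    (m * (|x| ^ (k+1) / ((k+1).factorial : ℝ)) ≤ |φ x| ∧
      |φ x| ≤ M * (|x| ^ (k+1) / ((k+1).factorial : ℝ))) ∧
    (m * (|x| ^ k / (k.factorial : ℝ)) ≤ |derivWithin φ (Icc (-1:ℝ) 1) x| ∧
      |derivWithin φ (Icc (-1:ℝ) 1) x| ≤ M * (|x| ^ k / (k.factorial : ℝ))) ∧
    (0 < x → 0 < φ x ∧ 0 < derivWithin φ (Icc (-1:ℝ) 1) x) ∧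
    (x < 0 → (-1:ℝ) ^ (k+1) * φ x = |φ x| ∧
      (-1:ℝ) ^ k * derivWithin φ (Icc (-1:ℝ) 1) x = |derivWithin φ (Icc (-1:ℝ) 1) x|) := by
  have hxmem : x ∈ uIcc (0:ℝ) x := right_mem_uIcc
  -- the two sandwich facts
  have s1 := sandwich hφ hzero hx hmM hb (k+1) le_rfl x hxmem
  have s2 := sandwich hφ hzero hx hmM hb k (Nat.le_succ k) x hxmem
  simp only [Nat.sub_self] at s1
  have hks : k + 1 - k = 1 := by omega
  rw [hks] at s2
  rw [iteratedDerivWithin_zero] at s1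
  rw [iteratedDerivWithin_one] at s2
  have e1 : ∀ c : ℝ, c * x ^ (k+1) / (((k+1).factorial) : ℝ) = c * (x ^ (k+1) / ((k+1).factorial : ℝ)) := by
    intro c; ring
  have e2 : ∀ c : ℝ, c * x ^ k / ((k.factorial) : ℝ) = c * (x ^ k / (k.factorial : ℝ)) := by
    intro c; ring
  rw [e1, e1] at s1
  rw [e2, e2] at s2
  have ex1 := extract hm hmM s1
  have ex2 := extract hm hmM s2
  have hc1 : |x ^ (k+1) / ((k+1).factorial : ℝ)| = |x| ^ (k+1) / ((k+1).factorial : ℝ) := by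
    rw [abs_div, abs_pow, abs_of_pos (a := ((k+1).factorial : ℝ)) (by positivity)]
  have hc2 : |x ^ k / ((k.factorial) : ℝ)| = |x| ^ k / (k.factorial : ℝ) := by
    rw [abs_div, abs_pow, abs_of_pos (a := ((k.factorial) : ℝ)) (by positivity)]
  rw [hc1] at ex1
  rw [hc2] at ex2
  refine ⟨⟨ex1.1, ex1.2.1⟩, ⟨ex2.1, ex2.2.1⟩, ?_, ?_⟩
  · intro hxpos
    constructor
    · exact ex1.2.2.1 (by positivity)
    · exact ex2.2.2.1 (by positivity)
  · intro hxneg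
    constructor
    · rcases Nat.even_or_odd (k+1) with he | ho
      · have hcpos : 0 < x ^ (k+1) / ((k+1).factorial : ℝ) := by
          have := he.pow_pos (show x ≠ 0 by linarith) -- 0 < x ^ (k+1)
          positivity
        have := ex1.2.2.1 hcpos
        rw [he.neg_one_pow, one_mul, abs_of_pos this]
      · have hcneg : x ^ (k+1) / ((k+1).factorial : ℝ) < 0 := by
          have h1 : x ^ (k+1) < 0 := ho.pow_neg hxneg
          have h2 : (0:ℝ) < ((k+1).factorial : ℝ) := by positivity
          exact div_neg_of_neg_of_pos h1 h2
        have := ex1.2.2.2 hcneg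
        rw [ho.neg_one_pow, abs_of_neg this]
        ring
    · rcases Nat.even_or_odd k with he | ho
      · have hcpos : 0 < x ^ k / ((k.factorial) : ℝ) := by
          have := he.pow_pos (show x ≠ 0 by linarith)
          positivity
        have := ex2.2.2.1 hcpos
        rw [he.neg_one_pow, one_mul, abs_of_pos this]
      · have hcneg : x ^ k / ((k.factorial) : ℝ) < 0 := by
          have h1 : x ^ k < 0 := ho.pow_neg hxneg
          have h2 : (0:ℝ) < ((k.factorial) : ℝ) := by positivity
          exact div_neg_of_neg_of_pos h1 h2
        have := ex2.2.2.2 hcneg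
        rw [ho.neg_one_pow, abs_of_neg this]
        ring

lemma core_id {x q : ℝ} (hx : x ≠ 0) (hq : 0 < q) (k : ℕ) :
    (q / |x| ^ (k+1)) ^ ((1:ℝ)/(k+1) - 1) = q ^ ((1:ℝ)/(k+1) - 1) * |x| ^ k := by
  have hax : (0:ℝ) < |x| := abs_pos.2 hx
  rw [Real.div_rpow hq.le (by positivity)]
  rw [← Real.rpow_natCast |x| (k+1), ← Real.rpow_mul hax.le]
  have hexp : ((k+1:ℕ):ℝ) * ((1:ℝ)/(k+1) - 1) = -(k:ℝ) := by
    have : ((k:ℝ)+1) ≠ 0 := by positivity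
    push_cast
    field_simp
    ring
  rw [hexp, Real.rpow_neg hax.le, Real.rpow_natCast]
  field_simp

lemma Gx_eq2 {x p q : ℝ} (hx : x ≠ 0) (hq : 0 < q) (k : ℕ) :
    ((1:ℝ)/(k+1)) * p * q ^ ((1:ℝ)/(k+1) - 1)
      = ((1:ℝ)/(k+1)) * (p / |x| ^ k) * ((q / |x| ^ (k+1)) ^ ((1:ℝ)/(k+1) - 1)) := by
  rw [core_id hx hq]
  have hax : (0:ℝ) < |x| ^ k := by positivity
  field_simp

lemma G0_eq {D : ℝ} (hD : 0 < D) (k : ℕ) :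
    (D / ((k+1).factorial : ℝ)) ^ ((1:ℝ)/(k+1))
      = ((1:ℝ)/(k+1)) * (D / (k.factorial : ℝ))
        * ((D / ((k+1).factorial : ℝ)) ^ ((1:ℝ)/(k+1) - 1)) := by
  have hb : (0:ℝ) < D / ((k+1).factorial : ℝ) := by positivity
  have h1 : (D / ((k+1).factorial:ℝ)) ^ ((1:ℝ)/(k+1))
      = (D / ((k+1).factorial:ℝ)) ^ ((1:ℝ)/(k+1) - 1) * (D/((k+1).factorial:ℝ)) := by
    rw [← Real.rpow_add_one hb.ne']
    norm_num
  rw [h1, Nat.factorial_succ]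
  have hk1 : ((k:ℝ)+1) ≠ 0 := by positivity
  have hkf : ((k.factorial:ℝ)) ≠ 0 := by positivity
  push_cast
  field_simp

lemma slope_id {t q : ℝ} (ht : t ≠ 0) (hq : 0 ≤ q) (k : ℕ) :
    Real.sign t * q ^ ((1:ℝ)/(k+1)) / t = (q / |t| ^ (k+1)) ^ ((1:ℝ)/(k+1)) := by
  have hat : 0 < |t| := abs_pos.2 ht
  have hexp : ((k+1:ℕ):ℝ) * ((1:ℝ)/(k+1)) = 1 := by
    have : ((k:ℝ)+1) ≠ 0 := by positivity
    push_cast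
    field_simp
  have h1 : ((|t| ^ (k+1) : ℝ)) ^ ((1:ℝ)/(k+1)) = |t| := by
    rw [← Real.rpow_natCast |t| (k+1), ← Real.rpow_mul hat.le, hexp, Real.rpow_one]
  rw [Real.div_rpow hq (by positivity), h1]
  rcases lt_or_gt_of_ne ht with h | h
  · rw [Real.sign_of_neg h, abs_of_neg h]
    field_simp
  · rw [Real.sign_of_pos h, abs_of_pos h]
    field_simp

lemma bounds10 (hφ : ContDiffOn ℝ (k+1) φ (Icc (-1:ℝ) 1))
    (hzero : ∀ j ≤ k, iteratedDerivWithin j φ (Icc (-1:ℝ) 1) 0 = 0)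
    (hbound : ∀ x ∈ Icc (-1:ℝ) 1,
      1/10 ≤ iteratedDerivWithin (k+1) φ (Icc (-1:ℝ) 1) x ∧
        iteratedDerivWithin (k+1) φ (Icc (-1:ℝ) 1) x ≤ 10)
    {x : ℝ} (hx : x ∈ Icc (-1:ℝ) 1) :
    ((1/10 : ℝ) * (|x| ^ (k+1) / ((k+1).factorial : ℝ)) ≤ |φ x| ∧
      |φ x| ≤ 10 * (|x| ^ (k+1) / ((k+1).factorial : ℝ))) ∧
    ((1/10 : ℝ) * (|x| ^ k / (k.factorial : ℝ)) ≤ |derivWithin φ (Icc (-1:ℝ) 1) x| ∧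
      |derivWithin φ (Icc (-1:ℝ) 1) x| ≤ 10 * (|x| ^ k / (k.factorial : ℝ))) ∧
    (0 < x → 0 < φ x ∧ 0 < derivWithin φ (Icc (-1:ℝ) 1) x) ∧
    (x < 0 → (-1:ℝ) ^ (k+1) * φ x = |φ x| ∧
      (-1:ℝ) ^ k * derivWithin φ (Icc (-1:ℝ) 1) x = |derivWithin φ (Icc (-1:ℝ) 1) x|) := by
  apply bounds_gen hφ hzero (by norm_num) (by norm_num) hx
  intro t ht
  have htS : t ∈ Icc (-1:ℝ) 1 := (ordConnected_Icc).uIcc_subset hS0 hx ht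
  exact ⟨(hbound t htS).1, (hbound t htS).2⟩

lemma div_mem {z P Q a b : ℝ} (hP : 0 < P) (hQ : 0 < Q)
    (h1 : a * (P/Q) ≤ z) (h2 : z ≤ b * (P/Q)) : z * Q / P ∈ Icc a b := by
  have h1' : a * P / Q ≤ z := by rwa [← mul_div_assoc] at h1
  have h2' : z ≤ b * P / Q := by rwa [← mul_div_assoc] at h2
  constructor
  · rw [le_div_iff₀ hP]
    have := (div_le_iff₀ hQ).1 h1'
    linarith
  · rw [div_le_iff₀ hP]
    have := (le_div_iff₀ hQ).1 h2'
    linarith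

lemma abs_le_of_mem_uIcc {s t : ℝ} (hs : s ∈ uIcc (0:ℝ) t) : |s| ≤ |t| := by
  rw [abs_le]
  rcases mem_uIcc.1 hs with h | h <;>
    constructor <;> linarith [le_abs_self t, neg_abs_le t]

lemma near0 (hφ : ContDiffOn ℝ (k+1) φ (Icc (-1:ℝ) 1))
    (hzero : ∀ j ≤ k, iteratedDerivWithin j φ (Icc (-1:ℝ) 1) 0 = 0)
    (hbound : ∀ x ∈ Icc (-1:ℝ) 1,
      1/10 ≤ iteratedDerivWithin (k+1) φ (Icc (-1:ℝ) 1) x ∧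
        iteratedDerivWithin (k+1) φ (Icc (-1:ℝ) 1) x ≤ 10)
    {η : ℝ} (hη : 0 < η) (hη2 : η ≤ 1/20) :
    ∃ δ > 0, ∀ t ∈ Icc (-1:ℝ) 1, t ≠ 0 → |t| < δ →
      (|φ t| * (((k+1).factorial) : ℝ) / |t| ^ (k+1) ∈
        Icc (iteratedDerivWithin (k+1) φ (Icc (-1:ℝ) 1) 0 - η)
            (iteratedDerivWithin (k+1) φ (Icc (-1:ℝ) 1) 0 + η)) ∧
      (|derivWithin φ (Icc (-1:ℝ) 1) t| * ((k.factorial) : ℝ) / |t| ^ k ∈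
        Icc (iteratedDerivWithin (k+1) φ (Icc (-1:ℝ) 1) 0 - η)
            (iteratedDerivWithin (k+1) φ (Icc (-1:ℝ) 1) 0 + η)) := by
  set D := iteratedDerivWithin (k+1) φ (Icc (-1:ℝ) 1) 0 with hD
  have hD1 : 1/10 ≤ D := (hbound 0 hS0).1
  have hcont : ContinuousWithinAt (iteratedDerivWithin (k+1) φ (Icc (-1:ℝ) 1))
      (Icc (-1:ℝ) 1) 0 := (Fcont hφ le_rfl) 0 hS0
  rw [Metric.continuousWithinAt_iff] at hcont
  obtain ⟨δ, hδ, hdel⟩ := hcont η hη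
  refine ⟨δ, hδ, ?_⟩
  intro t htS ht0 htδ
  have hb : ∀ s ∈ uIcc (0:ℝ) t,
      iteratedDerivWithin (k+1) φ (Icc (-1:ℝ) 1) s ∈ Icc (D - η) (D + η) := by
    intro s hs
    have hsS : s ∈ Icc (-1:ℝ) 1 := (ordConnected_Icc).uIcc_subset hS0 htS hs
    have hsd : dist s 0 < δ := by
      rw [Real.dist_eq, sub_zero]
      exact lt_of_le_of_lt (abs_le_of_mem_uIcc hs) htδ
    have := hdel hsS hsd
    rw [Real.dist_eq] at this
    have := abs_sub_lt_iff.1 this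
    constructor <;> linarith [this.1, this.2]
  have hm : (0:ℝ) < D - η := by linarith
  have hB := bounds_gen hφ hzero hm (by linarith) htS hb
  have htpos : (0:ℝ) < |t| := abs_pos.2 ht0
  constructor
  · exact div_mem (by positivity) (by positivity) hB.1.1 hB.1.2
  · exact div_mem (by positivity) (by positivity) hB.2.1.1 hB.2.1.2

/-- candidate derivative of `covk` -/
def Gf (k : ℕ) (φ : ℝ → ℝ) : ℝ → ℝ := fun x =>
  if x = 0 then
    (iteratedDerivWithin (k+1) φ (Icc (-1:ℝ) 1) 0 / ((k+1).factorial : ℝ)) ^ ((1:ℝ)/(k+1))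
  else ((1:ℝ)/(k+1)) * |derivWithin φ (Icc (-1:ℝ) 1) x| * |φ x| ^ ((1:ℝ)/(k+1) - 1)

def hfun (k : ℕ) (v w : ℝ) : ℝ :=
  ((1:ℝ)/(k+1)) * (v / (k.factorial : ℝ)) *
    ((w / ((k+1).factorial : ℝ)) ^ ((1:ℝ)/(k+1) - 1))

def gam (k : ℕ) : ℝ := hfun k (1/10) 10
def Gam (k : ℕ) : ℝ := hfun k 10 (1/10)

lemma rexp_nonpos (k : ℕ) : (1:ℝ)/(k+1) - 1 ≤ 0 := by
  have h0 : (0:ℝ) ≤ (k:ℝ) := Nat.cast_nonneg k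
  have h1 : (0:ℝ) < (k:ℝ)+1 := by linarith
  have := (div_le_one h1).2 (by linarith : (1:ℝ) ≤ (k:ℝ)+1)
  linarith

lemma hfun_pos {k : ℕ} {v w : ℝ} (hv : 0 < v) (hw : 0 < w) : 0 < hfun k v w := by
  unfold hfun
  have h1 : (0:ℝ) < (k:ℝ)+1 := by positivity
  have hb : (0:ℝ) < w / ((k+1).factorial : ℝ) := by positivity
  have h2 := Real.rpow_pos_of_pos hb ((1:ℝ)/(k+1) - 1)
  positivity

lemma hfun_le {k : ℕ} {v1 v2 w1 w2 : ℝ} (hv1 : 0 ≤ v1) (hv : v1 ≤ v2)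
    (hw1 : 0 < w1) (hw : w1 ≤ w2) : hfun k v1 w2 ≤ hfun k v2 w1 := by
  unfold hfun
  have hr := rexp_nonpos k
  have h1 : ((w2 / ((k+1).factorial:ℝ)) ^ ((1:ℝ)/(k+1) - 1)) ≤
      ((w1 / ((k+1).factorial:ℝ)) ^ ((1:ℝ)/(k+1) - 1)) :=
    Real.rpow_le_rpow_of_nonpos (by positivity) (by gcongr) hr
  have h2 : ((1:ℝ)/(k+1)) * (v1 / (k.factorial : ℝ)) ≤ ((1:ℝ)/(k+1)) * (v2 / (k.factorial : ℝ)) := by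
    have h3 : (0:ℝ) < (k:ℝ)+1 := by positivity
    gcongr
  have hw2 : (0:ℝ) ≤ w2 := le_trans hw1.le hw
  have hv2 : (0:ℝ) ≤ v2 := le_trans hv1 hv
  have h3 : (0:ℝ) < (k:ℝ)+1 := by positivity
  apply mul_le_mul h2 h1 (Real.rpow_nonneg (by positivity) _) (by positivity)

lemma gam_pos (k : ℕ) : 0 < gam k := hfun_pos (by norm_num) (by norm_num)

lemma Gam_pos (k : ℕ) : 0 < Gam k := hfun_pos (by norm_num) (by norm_num)

lemma gam_lt_Gam (k : ℕ) : gam k < Gam k := by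
  have h1 : gam k ≤ hfun k (1/10) (1/10) := hfun_le (by norm_num) le_rfl (by norm_num) (by norm_num)
  have h2 : hfun k (1/10) (1/10) < Gam k := by
    unfold Gam hfun
    have hkf : (0:ℝ) < (k.factorial : ℝ) := by positivity
    have h3 : (0:ℝ) < (k:ℝ)+1 := by positivity
    have hb : (0:ℝ) < (1/10 : ℝ) / ((k+1).factorial : ℝ) := by positivity
    apply mul_lt_mul_of_pos_right ?_ (Real.rpow_pos_of_pos hb _)
    apply mul_lt_mul_of_pos_left ?_ (by positivity)
    exact (div_lt_div_iff_of_pos_right hkf).2 (by norm_num)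
  linarith

lemma vdiv {p P Q : ℝ} (hP : P ≠ 0) : (p * P / Q) / P = p / Q := by
  rw [div_div, mul_comm Q P, ← div_div, mul_div_cancel_right₀ _ hP]

lemma G_mem (hφ : ContDiffOn ℝ (k+1) φ (Icc (-1:ℝ) 1))
    (hzero : ∀ j ≤ k, iteratedDerivWithin j φ (Icc (-1:ℝ) 1) 0 = 0)
    (hbound : ∀ x ∈ Icc (-1:ℝ) 1,
      1/10 ≤ iteratedDerivWithin (k+1) φ (Icc (-1:ℝ) 1) x ∧
        iteratedDerivWithin (k+1) φ (Icc (-1:ℝ) 1) x ≤ 10)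
    {x : ℝ} (hx : x ∈ Icc (-1:ℝ) 1) : Gf k φ x ∈ Icc (gam k) (Gam k) := by
  by_cases hx0 : x = 0
  · subst hx0
    have hD1 := (hbound 0 hS0).1
    have hD2 := (hbound 0 hS0).2
    have hD : 0 < iteratedDerivWithin (k+1) φ (Icc (-1:ℝ) 1) 0 := by linarith
    have heq : Gf k φ 0 = hfun k (iteratedDerivWithin (k+1) φ (Icc (-1:ℝ) 1) 0)
        (iteratedDerivWithin (k+1) φ (Icc (-1:ℝ) 1) 0) := by
      rw [Gf, if_pos rfl, G0_eq hD k]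
      rfl
    rw [heq]
    constructor
    · exact hfun_le (by norm_num) hD1 hD hD2
    · exact hfun_le hD.le hD2 (by norm_num) hD1
  · have hB := bounds10 hφ hzero hbound hx
    have haxp : 0 < |x| := abs_pos.2 hx0
    have hφpos : 0 < |φ x| := lt_of_lt_of_le (by positivity) hB.1.1
    have hkf : ((k.factorial : ℝ)) ≠ 0 := by positivity
    have hkf1 : (((k+1).factorial : ℝ)) ≠ 0 := by positivity
    have hv := div_mem (P := |x|^k) (Q := (k.factorial : ℝ))
      (by positivity) (by positivity) hB.2.1.1 hB.2.1.2
    have hw := div_mem (P := |x|^(k+1)) (Q := ((k+1).factorial : ℝ))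
      (by positivity) (by positivity) hB.1.1 hB.1.2
    have heq : Gf k φ x = hfun k (|derivWithin φ (Icc (-1:ℝ) 1) x| * (k.factorial : ℝ) / |x|^k)
        (|φ x| * ((k+1).factorial : ℝ) / |x|^(k+1)) := by
      rw [Gf, if_neg hx0, Gx_eq2 hx0 hφpos k,
        ← vdiv (p := |derivWithin φ (Icc (-1:ℝ) 1) x|) (P := (k.factorial:ℝ)) (Q := |x|^k) hkf,
        ← vdiv (p := |φ x|) (P := ((k+1).factorial:ℝ)) (Q := |x|^(k+1)) hkf1]
      rfl
    rw [heq]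
    constructor
    · exact hfun_le (by norm_num) hv.1 (by positivity) hw.2
    · exact hfun_le (by positivity) hv.2 (by norm_num) hw.1

lemma phi_hasDeriv (hφ : ContDiffOn ℝ (k+1) φ (Icc (-1:ℝ) 1)) :
    ∀ t ∈ Icc (-1:ℝ) 1,
      HasDerivWithinAt φ (derivWithin φ (Icc (-1:ℝ) 1) t) (Icc (-1:ℝ) 1) t := by
  intro t ht
  have h := Fderiv (k := k) hφ (Nat.zero_le k) t ht
  rwa [iteratedDerivWithin_zero, zero_add, iteratedDerivWithin_one] at h

lemma covk_zero : covk k φ 0 = 0 := by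
  simp [covk, Real.sign_zero]

lemma hasDeriv_ne (hφ : ContDiffOn ℝ (k+1) φ (Icc (-1:ℝ) 1))
    (hzero : ∀ j ≤ k, iteratedDerivWithin j φ (Icc (-1:ℝ) 1) 0 = 0)
    (hbound : ∀ x ∈ Icc (-1:ℝ) 1,
      1/10 ≤ iteratedDerivWithin (k+1) φ (Icc (-1:ℝ) 1) x ∧
        iteratedDerivWithin (k+1) φ (Icc (-1:ℝ) 1) x ≤ 10)
    {x : ℝ} (hx : x ∈ Icc (-1:ℝ) 1) (hx0 : x ≠ 0) :
    HasDerivWithinAt (covk k φ) (Gf k φ x) (Icc (-1:ℝ) 1) x := by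
  have hB := bounds10 hφ hzero hbound hx
  have haxp : 0 < |x| := abs_pos.2 hx0
  have hφpos : 0 < |φ x| := lt_of_lt_of_le (by positivity) hB.1.1
  have hder := phi_hasDeriv hφ x hx
  rcases lt_or_gt_of_ne hx0 with hneg | hpos
  · have hsx := hB.2.2.2 hneg
    have hev : ∀ᶠ t in nhdsWithin x (Icc (-1:ℝ) 1),
        covk k φ t = -(((-1:ℝ)^(k+1) * φ t) ^ ((1:ℝ)/(k+1))) := by
      filter_upwards [self_mem_nhdsWithin,
        mem_nhdsWithin_of_mem_nhds (Iio_mem_nhds hneg)] with t htS htneg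
      have hst := (bounds10 hφ hzero hbound htS).2.2.2 htneg
      show Real.sign t * |φ t| ^ ((1:ℝ)/(k+1)) = _
      rw [Real.sign_of_neg htneg, hst.1, neg_one_mul]
    have inner : HasDerivWithinAt (fun t => (-1:ℝ)^(k+1) * φ t)
        ((-1:ℝ)^(k+1) * derivWithin φ (Icc (-1:ℝ) 1) x) (Icc (-1:ℝ) 1) x := hder.const_mul _
    have hbase : ((-1:ℝ)^(k+1) * φ x) ≠ 0 := by rw [hsx.1]; exact hφpos.ne'
    have main := (inner.rpow_const (p := (1:ℝ)/(k+1)) (Or.inl hbase)).neg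
    have hvx : covk k φ x = -(((-1:ℝ)^(k+1) * φ x) ^ ((1:ℝ)/(k+1))) := by
      show Real.sign x * |φ x| ^ ((1:ℝ)/(k+1)) = _
      rw [Real.sign_of_neg hneg, hsx.1, neg_one_mul]
    have final := main.congr_of_eventuallyEq hev hvx
    refine final.congr_deriv (Eq.symm ?_)
    rw [Gf, if_neg hx0, hsx.1, ← hsx.2, pow_succ]
    ring
  · have hev : ∀ᶠ t in nhdsWithin x (Icc (-1:ℝ) 1),
        covk k φ t = (φ t) ^ ((1:ℝ)/(k+1)) := by
      filter_upwards [self_mem_nhdsWithin,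
        mem_nhdsWithin_of_mem_nhds (Ioi_mem_nhds hpos)] with t htS htpos
      have hst := ((bounds10 hφ hzero hbound htS).2.2.1 htpos).1
      show Real.sign t * |φ t| ^ ((1:ℝ)/(k+1)) = _
      rw [Real.sign_of_pos htpos, abs_of_pos hst, one_mul]
    have hφx := hB.2.2.1 hpos
    have main := hder.rpow_const (p := (1:ℝ)/(k+1)) (Or.inl hφx.1.ne')
    have hvx : covk k φ x = (φ x) ^ ((1:ℝ)/(k+1)) := by
      show Real.sign x * |φ x| ^ ((1:ℝ)/(k+1)) = _
      rw [Real.sign_of_pos hpos, abs_of_pos hφx.1, one_mul]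
    have final := main.congr_of_eventuallyEq hev hvx
    refine final.congr_deriv (Eq.symm ?_)
    rw [Gf, if_neg hx0, abs_of_pos hφx.1, abs_of_pos hφx.2]
    ring

lemma W_tendsto (hφ : ContDiffOn ℝ (k+1) φ (Icc (-1:ℝ) 1))
    (hzero : ∀ j ≤ k, iteratedDerivWithin j φ (Icc (-1:ℝ) 1) 0 = 0)
    (hbound : ∀ x ∈ Icc (-1:ℝ) 1,
      1/10 ≤ iteratedDerivWithin (k+1) φ (Icc (-1:ℝ) 1) x ∧
        iteratedDerivWithin (k+1) φ (Icc (-1:ℝ) 1) x ≤ 10) :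
    Tendsto (fun t => |φ t| * (((k+1).factorial):ℝ) / |t|^(k+1))
      (nhdsWithin 0 (Icc (-1:ℝ) 1 \ {0}))
      (nhds (iteratedDerivWithin (k+1) φ (Icc (-1:ℝ) 1) 0)) ∧
    Tendsto (fun t => |derivWithin φ (Icc (-1:ℝ) 1) t| * ((k.factorial):ℝ) / |t|^k)
      (nhdsWithin 0 (Icc (-1:ℝ) 1 \ {0}))
      (nhds (iteratedDerivWithin (k+1) φ (Icc (-1:ℝ) 1) 0)) := by
  set D := iteratedDerivWithin (k+1) φ (Icc (-1:ℝ) 1) 0 with hDdef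
  have key : ∀ ε > (0:ℝ), ∃ δ > (0:ℝ), ∀ t ∈ Icc (-1:ℝ) 1 \ {(0:ℝ)}, dist t 0 < δ →
      dist (|φ t| * (((k+1).factorial):ℝ) / |t|^(k+1)) D < ε ∧
      dist (|derivWithin φ (Icc (-1:ℝ) 1) t| * ((k.factorial):ℝ) / |t|^k) D < ε := by
    intro ε hε
    set η := min (ε/2) (1/20 : ℝ) with hηdef
    have hη : 0 < η := lt_min (by linarith) (by norm_num)
    have hη2 : η ≤ 1/20 := min_le_right _ _
    have hηε : η < ε := lt_of_le_of_lt (min_le_left _ _) (by linarith)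
    obtain ⟨δ, hδ, hnear⟩ := near0 hφ hzero hbound hη hη2
    refine ⟨δ, hδ, ?_⟩
    intro t ht htd
    rw [Real.dist_eq, sub_zero] at htd
    obtain ⟨h1, h2⟩ := hnear t ht.1 (by simpa using ht.2) htd
    rw [Real.dist_eq, Real.dist_eq]
    constructor
    · rw [abs_sub_lt_iff]
      constructor <;> [linarith [h1.2]; linarith [h1.1]]
    · rw [abs_sub_lt_iff]
      constructor <;> [linarith [h2.2]; linarith [h2.1]]
  constructor
  · rw [Metric.tendsto_nhdsWithin_nhds]
    intro ε hε
    obtain ⟨δ, hδ, h⟩ := key ε hε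
    exact ⟨δ, hδ, fun {t} ht htd => (h t ht htd).1⟩
  · rw [Metric.tendsto_nhdsWithin_nhds]
    intro ε hε
    obtain ⟨δ, hδ, h⟩ := key ε hε
    exact ⟨δ, hδ, fun {t} ht htd => (h t ht htd).2⟩

lemma Gf_zero_eq : Gf k φ 0 =
    (iteratedDerivWithin (k+1) φ (Icc (-1:ℝ) 1) 0 / ((k+1).factorial : ℝ)) ^ ((1:ℝ)/(k+1)) := by
  simp only [Gf, if_true, eq_self_iff_true]

lemma hasDeriv_zero (hφ : ContDiffOn ℝ (k+1) φ (Icc (-1:ℝ) 1))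
    (hzero : ∀ j ≤ k, iteratedDerivWithin j φ (Icc (-1:ℝ) 1) 0 = 0)
    (hbound : ∀ x ∈ Icc (-1:ℝ) 1,
      1/10 ≤ iteratedDerivWithin (k+1) φ (Icc (-1:ℝ) 1) x ∧
        iteratedDerivWithin (k+1) φ (Icc (-1:ℝ) 1) x ≤ 10) :
    HasDerivWithinAt (covk k φ) (Gf k φ 0) (Icc (-1:ℝ) 1) 0 := by
  rw [hasDerivWithinAt_iff_tendsto_slope]
  set D := iteratedDerivWithin (k+1) φ (Icc (-1:ℝ) 1) 0 with hDdef
  have hD : 0 < D := lt_of_lt_of_le (by norm_num) (hbound 0 hS0).1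
  have hkf1 : (((k+1).factorial : ℝ)) ≠ 0 := by positivity
  have hW := (W_tendsto hφ hzero hbound).1
  have hcont : ContinuousAt (fun w : ℝ => (w / (((k+1).factorial):ℝ)) ^ ((1:ℝ)/(k+1))) D := by
    apply ContinuousAt.rpow_const (continuousAt_id.div_const _)
    left
    positivity
  have hcomp := hcont.tendsto.comp hW
  rw [Gf_zero_eq]
  apply Filter.Tendsto.congr' ?_ hcomp
  filter_upwards [self_mem_nhdsWithin] with t ht
  have ht0 : t ≠ 0 := by simpa using ht.2
  have : slope (covk k φ) 0 t = covk k φ t / t := by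
    rw [slope_def_field]
    rw [covk_zero, sub_zero, sub_zero]
  rw [this]
  show (fun w : ℝ => (w / (((k+1).factorial):ℝ)) ^ ((1:ℝ)/(k+1)))
      (|φ t| * (((k+1).factorial):ℝ) / |t|^(k+1)) = covk k φ t / t
  simp only
  rw [vdiv hkf1]
  show (|φ t| / |t| ^ (k+1)) ^ ((1:ℝ)/(k+1)) = Real.sign t * |φ t| ^ ((1:ℝ)/(k+1)) / t
  rw [slope_id ht0 (abs_nonneg _) k]

lemma derivWithin_cont (hφ : ContDiffOn ℝ (k+1) φ (Icc (-1:ℝ) 1)) :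
    ContinuousOn (derivWithin φ (Icc (-1:ℝ) 1)) (Icc (-1:ℝ) 1) := by
  apply (Fcont (k := k) (j := 1) hφ (by omega)).congr
  intro t ht
  exact (congrFun iteratedDerivWithin_one t).symm

lemma Gf_cont (hφ : ContDiffOn ℝ (k+1) φ (Icc (-1:ℝ) 1))
    (hzero : ∀ j ≤ k, iteratedDerivWithin j φ (Icc (-1:ℝ) 1) 0 = 0)
    (hbound : ∀ x ∈ Icc (-1:ℝ) 1,
      1/10 ≤ iteratedDerivWithin (k+1) φ (Icc (-1:ℝ) 1) x ∧
        iteratedDerivWithin (k+1) φ (Icc (-1:ℝ) 1) x ≤ 10) :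
    ContinuousOn (Gf k φ) (Icc (-1:ℝ) 1) := by
  intro x hx
  by_cases hx0 : x = 0
  · subst hx0
    set D := iteratedDerivWithin (k+1) φ (Icc (-1:ℝ) 1) 0 with hDdef
    have hD1 := (hbound 0 hS0).1
    have hD2 := (hbound 0 hS0).2
    have hD : 0 < D := by linarith
    have hGf0 : Gf k φ 0 = hfun k D D := by
      rw [Gf_zero_eq, G0_eq hD k]; rfl
    rw [Metric.continuousWithinAt_iff]
    intro ε hε
    have hu1 : ContinuousAt (fun η : ℝ => hfun k (D - η) (D + η)) 0 := by
      apply ContinuousAt.mul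
      · exact (continuousAt_const.mul ((continuousAt_const.sub continuousAt_id).div_const _))
      · apply ContinuousAt.rpow_const
          ((continuousAt_const.add continuousAt_id).div_const _)
        left
        show (D + 0) / (((k+1).factorial:ℝ)) ≠ 0
        simp only [add_zero]
        positivity
    have hu2 : ContinuousAt (fun η : ℝ => hfun k (D + η) (D - η)) 0 := by
      apply ContinuousAt.mul
      · exact (continuousAt_const.mul ((continuousAt_const.add continuousAt_id).div_const _))
      · apply ContinuousAt.rpow_const
          ((continuousAt_const.sub continuousAt_id).div_const _)
        left
        show (D - 0) / (((k+1).factorial:ℝ)) ≠ 0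
        simp only [sub_zero]
        positivity
    rw [Metric.continuousAt_iff] at hu1 hu2
    obtain ⟨δ1, hδ1, h1⟩ := hu1 (ε/2) (by linarith)
    obtain ⟨δ2, hδ2, h2⟩ := hu2 (ε/2) (by linarith)
    set η := min (min (δ1/2) (δ2/2)) (1/20 : ℝ) with hηdef
    have hη : 0 < η := lt_min (lt_min (by linarith) (by linarith)) (by norm_num)
    have hη20 : η ≤ 1/20 := min_le_right _ _
    have hηδ1 : dist η 0 < δ1 := by
      rw [Real.dist_eq, sub_zero, abs_of_pos hη]
      calc η ≤ min (δ1/2) (δ2/2) := min_le_left _ _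
        _ ≤ δ1/2 := min_le_left _ _
        _ < δ1 := by linarith
    have hηδ2 : dist η 0 < δ2 := by
      rw [Real.dist_eq, sub_zero, abs_of_pos hη]
      calc η ≤ min (δ1/2) (δ2/2) := min_le_left _ _
        _ ≤ δ2/2 := min_le_right _ _
        _ < δ2 := by linarith
    have hb1 := h1 hηδ1
    have hb2 := h2 hηδ2
    rw [Real.dist_eq] at hb1 hb2
    simp only [sub_zero, add_zero] at hb1 hb2
    have hb1' := abs_sub_lt_iff.1 hb1
    have hb2' := abs_sub_lt_iff.1 hb2
    obtain ⟨δ, hδ, hnear⟩ := near0 hφ hzero hbound hη hη20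
    refine ⟨δ, hδ, ?_⟩
    intro t htS htd
    by_cases ht0 : t = 0
    · subst ht0; simpa using hε
    · rw [Real.dist_eq, sub_zero] at htd
      obtain ⟨hw, hv⟩ := hnear t htS ht0 htd
      have haxp : 0 < |t| := abs_pos.2 ht0
      have hB := bounds10 hφ hzero hbound htS
      have hφpos : 0 < |φ t| := lt_of_lt_of_le (by positivity) hB.1.1
      have hkf : ((k.factorial : ℝ)) ≠ 0 := by positivity
      have hkf1 : (((k+1).factorial : ℝ)) ≠ 0 := by positivity
      have heq : Gf k φ t = hfun k (|derivWithin φ (Icc (-1:ℝ) 1) t| * (k.factorial : ℝ) / |t|^k)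
          (|φ t| * ((k+1).factorial : ℝ) / |t|^(k+1)) := by
        simp only [Gf, if_neg ht0]
        rw [Gx_eq2 ht0 hφpos k,
          ← vdiv (p := |derivWithin φ (Icc (-1:ℝ) 1) t|) (P := (k.factorial:ℝ)) (Q := |t|^k) hkf,
          ← vdiv (p := |φ t|) (P := ((k+1).factorial:ℝ)) (Q := |t|^(k+1)) hkf1]
        rfl
      have hDη : 0 < D - η := by linarith
      have hlow : hfun k (D - η) (D + η) ≤ Gf k φ t := by
        rw [heq]
        exact hfun_le hDη.le hv.1 (lt_of_lt_of_le hDη hw.1) hw.2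
      have hhigh : Gf k φ t ≤ hfun k (D + η) (D - η) := by
        rw [heq]
        exact hfun_le (le_trans hDη.le hv.1) hv.2 hDη hw.1
      rw [Real.dist_eq, hGf0, abs_sub_lt_iff]
      constructor <;> linarith [hb1'.1, hb1'.2, hb2'.1, hb2'.2]
  · have hB := bounds10 hφ hzero hbound hx
    have haxp : 0 < |x| := abs_pos.2 hx0
    have hφpos : 0 < |φ x| := lt_of_lt_of_le (by positivity) hB.1.1
    have hg1 : ContinuousWithinAt
        (fun t => ((1:ℝ)/(k+1)) * |derivWithin φ (Icc (-1:ℝ) 1) t|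
          * |φ t| ^ ((1:ℝ)/(k+1) - 1)) (Icc (-1:ℝ) 1) x := by
      apply ContinuousWithinAt.mul
      · exact continuousWithinAt_const.mul ((derivWithin_cont hφ) x hx).abs
      · exact ((hφ.continuousOn x hx).abs.rpow_const (Or.inl hφpos.ne'))
    apply hg1.congr_of_eventuallyEq ?_ (by simp only [Gf, if_neg hx0])
    filter_upwards [mem_nhdsWithin_of_mem_nhds (compl_singleton_mem_nhds hx0)] with t ht
    simp only [Gf, if_neg (mem_compl_singleton_iff.1 ht)]

lemma covk_hasDeriv (hφ : ContDiffOn ℝ (k+1) φ (Icc (-1:ℝ) 1))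
    (hzero : ∀ j ≤ k, iteratedDerivWithin j φ (Icc (-1:ℝ) 1) 0 = 0)
    (hbound : ∀ x ∈ Icc (-1:ℝ) 1,
      1/10 ≤ iteratedDerivWithin (k+1) φ (Icc (-1:ℝ) 1) x ∧
        iteratedDerivWithin (k+1) φ (Icc (-1:ℝ) 1) x ≤ 10)
    {x : ℝ} (hx : x ∈ Icc (-1:ℝ) 1) :
    HasDerivWithinAt (covk k φ) (Gf k φ x) (Icc (-1:ℝ) 1) x := by
  by_cases hx0 : x = 0
  · subst hx0; exact hasDeriv_zero hφ hzero hbound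
  · exact hasDeriv_ne hφ hzero hbound hx hx0

lemma covk_derivWithin (hφ : ContDiffOn ℝ (k+1) φ (Icc (-1:ℝ) 1))
    (hzero : ∀ j ≤ k, iteratedDerivWithin j φ (Icc (-1:ℝ) 1) 0 = 0)
    (hbound : ∀ x ∈ Icc (-1:ℝ) 1,
      1/10 ≤ iteratedDerivWithin (k+1) φ (Icc (-1:ℝ) 1) x ∧
        iteratedDerivWithin (k+1) φ (Icc (-1:ℝ) 1) x ≤ 10)
    {x : ℝ} (hx : x ∈ Icc (-1:ℝ) 1) :
    derivWithin (covk k φ) (Icc (-1:ℝ) 1) x = Gf k φ x :=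
  (covk_hasDeriv hφ hzero hbound hx).derivWithin (uS x hx)

lemma covk_contDiff (hφ : ContDiffOn ℝ (k+1) φ (Icc (-1:ℝ) 1))
    (hzero : ∀ j ≤ k, iteratedDerivWithin j φ (Icc (-1:ℝ) 1) 0 = 0)
    (hbound : ∀ x ∈ Icc (-1:ℝ) 1,
      1/10 ≤ iteratedDerivWithin (k+1) φ (Icc (-1:ℝ) 1) x ∧
        iteratedDerivWithin (k+1) φ (Icc (-1:ℝ) 1) x ≤ 10) :
    ContDiffOn ℝ 1 (covk k φ) (Icc (-1:ℝ) 1) := by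
  have h := (contDiffOn_succ_iff_derivWithin (n := 0) uS
      (f := covk k φ)).2 ⟨fun x hx => (covk_hasDeriv hφ hzero hbound hx).differentiableWithinAt,
    by simp, (contDiffOn_zero).2 ((Gf_cont hφ hzero hbound).congr
      (fun x hx => covk_derivWithin hφ hzero hbound hx))⟩
  simpa using h

lemma covk_mono (hφ : ContDiffOn ℝ (k+1) φ (Icc (-1:ℝ) 1))
    (hzero : ∀ j ≤ k, iteratedDerivWithin j φ (Icc (-1:ℝ) 1) 0 = 0)
    (hbound : ∀ x ∈ Icc (-1:ℝ) 1,
      1/10 ≤ iteratedDerivWithin (k+1) φ (Icc (-1:ℝ) 1) x ∧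
        iteratedDerivWithin (k+1) φ (Icc (-1:ℝ) 1) x ≤ 10) :
    StrictMonoOn (covk k φ) (Icc (-1:ℝ) 1) := by
  apply strictMonoOn_of_hasDerivWithinAt_pos (convex_Icc _ _)
    (covk_contDiff hφ hzero hbound).continuousOn (f' := Gf k φ)
  · exact fun x hx =>
      ((covk_hasDeriv hφ hzero hbound (interior_subset hx)).mono interior_subset)
  · exact fun x hx =>
      lt_of_lt_of_le (gam_pos k) (G_mem hφ hzero hbound (interior_subset hx)).1

lemma covk_bij (hφ : ContDiffOn ℝ (k+1) φ (Icc (-1:ℝ) 1))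
    (hzero : ∀ j ≤ k, iteratedDerivWithin j φ (Icc (-1:ℝ) 1) 0 = 0)
    (hbound : ∀ x ∈ Icc (-1:ℝ) 1,
      1/10 ≤ iteratedDerivWithin (k+1) φ (Icc (-1:ℝ) 1) x ∧
        iteratedDerivWithin (k+1) φ (Icc (-1:ℝ) 1) x ≤ 10) :
    BijOn (covk k φ) (Icc (-1:ℝ) 1) (Icc (covk k φ (-1)) (covk k φ 1)) := by
  have hmono := covk_mono hφ hzero hbound
  have hm1 : (-1:ℝ) ∈ Icc (-1:ℝ) 1 := by norm_num
  have h1 : (1:ℝ) ∈ Icc (-1:ℝ) 1 := by norm_num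
  refine ⟨?_, hmono.injOn, ?_⟩
  · intro x hx
    exact ⟨hmono.monotoneOn hm1 hx hx.1, hmono.monotoneOn hx h1 hx.2⟩
  · exact intermediate_value_Icc (by norm_num) (covk_contDiff hφ hzero hbound).continuousOn

lemma xinv_cont (hφ : ContDiffOn ℝ (k+1) φ (Icc (-1:ℝ) 1))
    (hzero : ∀ j ≤ k, iteratedDerivWithin j φ (Icc (-1:ℝ) 1) 0 = 0)
    (hbound : ∀ x ∈ Icc (-1:ℝ) 1,
      1/10 ≤ iteratedDerivWithin (k+1) φ (Icc (-1:ℝ) 1) x ∧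
        iteratedDerivWithin (k+1) φ (Icc (-1:ℝ) 1) x ≤ 10) :
    ContinuousOn (Function.invFunOn (covk k φ) (Icc (-1:ℝ) 1))
      (Icc (covk k φ (-1)) (covk k φ 1)) := by
  have hbij := covk_bij hφ hzero hbound
  have hinv := hbij.invOn_invFunOn
  haveI : CompactSpace (Icc (-1:ℝ) 1) := isCompact_iff_compactSpace.mp isCompact_Icc
  have hcont : Continuous (hbij.mapsTo.restrict (covk k φ) _ _) :=
    (covk_contDiff hφ hzero hbound).continuousOn.mapsToRestrict hbij.mapsTo
  have hcont' : Continuous (hbij.equiv (covk k φ)) := hcont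
  let homeo := Continuous.homeoOfEquivCompactToT2 (f := hbij.equiv (covk k φ)) hcont'
  rw [continuousOn_iff_continuous_restrict]
  have heq : (Icc (covk k φ (-1)) (covk k φ 1)).restrict (Function.invFunOn (covk k φ) (Icc (-1:ℝ) 1))
      = Subtype.val ∘ homeo.symm := by
    funext z
    apply hbij.injOn
    · exact Function.invFunOn_mem (hbij.surjOn z.2)
    · exact (homeo.symm z).2
    · have h1 : covk k φ (Function.invFunOn (covk k φ) (Icc (-1:ℝ) 1) z) = z :=
        hbij.surjOn.rightInvOn_invFunOn z.2
      have h2 : covk k φ ((homeo.symm z : ↥(Icc (-1:ℝ) 1)) : ℝ) = z := by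
        have := homeo.apply_symm_apply z
        have h3 : (homeo (homeo.symm z) : ℝ) = (z : ℝ) := by rw [this]
        exact h3
      show covk k φ (Function.invFunOn (covk k φ) (Icc (-1:ℝ) 1) ↑z) = covk k φ ↑(homeo.symm z)
      rw [h1, h2]
  rw [show (Icc (covk k φ (-1)) (covk k φ 1)).domRestrict (Function.invFunOn (covk k φ) (Icc (-1:ℝ) 1)) = Subtype.val ∘ homeo.symm from heq]
  exact continuous_subtype_val.comp homeo.symm.continuous

lemma xinv_hasDeriv (hφ : ContDiffOn ℝ (k+1) φ (Icc (-1:ℝ) 1))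
    (hzero : ∀ j ≤ k, iteratedDerivWithin j φ (Icc (-1:ℝ) 1) 0 = 0)
    (hbound : ∀ x ∈ Icc (-1:ℝ) 1,
      1/10 ≤ iteratedDerivWithin (k+1) φ (Icc (-1:ℝ) 1) x ∧
        iteratedDerivWithin (k+1) φ (Icc (-1:ℝ) 1) x ≤ 10)
    {z : ℝ} (hz : z ∈ Icc (covk k φ (-1)) (covk k φ 1)) :
    HasDerivWithinAt (Function.invFunOn (covk k φ) (Icc (-1:ℝ) 1))
      ((Gf k φ (Function.invFunOn (covk k φ) (Icc (-1:ℝ) 1) z))⁻¹)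
      (Icc (covk k φ (-1)) (covk k φ 1)) z := by
  have hbij := covk_bij hφ hzero hbound
  set xinv := Function.invFunOn (covk k φ) (Icc (-1:ℝ) 1) with hxinvdef
  set x := xinv z with hxdef
  have hxS : x ∈ Icc (-1:ℝ) 1 := Function.invFunOn_mem (hbij.surjOn hz)
  have hyx : covk k φ x = z := hbij.surjOn.rightInvOn_invFunOn hz
  have hGx : 0 < Gf k φ x := lt_of_lt_of_le (gam_pos k) (G_mem hφ hzero hbound hxS).1
  rw [hasDerivWithinAt_iff_tendsto_slope]
  have hxtend : Tendsto xinv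
      (nhdsWithin z ((Icc (covk k φ (-1)) (covk k φ 1)) \ {z}))
      (nhdsWithin x ((Icc (-1:ℝ) 1) \ {x})) := by
    rw [tendsto_nhdsWithin_iff]
    constructor
    · have hc : ContinuousWithinAt xinv (Icc (covk k φ (-1)) (covk k φ 1)) z :=
        (xinv_cont hφ hzero hbound) z hz
      exact hc.tendsto.mono_left (nhdsWithin_mono _ diff_subset)
    · filter_upwards [self_mem_nhdsWithin] with w hw
      have hwT : w ∈ Icc (covk k φ (-1)) (covk k φ 1) := hw.1
      have hwz : w ≠ z := by simpa using hw.2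
      refine ⟨Function.invFunOn_mem (hbij.surjOn hwT), ?_⟩
      simp only [mem_singleton_iff]
      intro hcontra
      apply hwz
      have h1 : covk k φ (xinv w) = w := hbij.surjOn.rightInvOn_invFunOn hwT
      rw [← h1, hcontra, hyx]
  have hslope := hasDerivWithinAt_iff_tendsto_slope.1 (covk_hasDeriv hφ hzero hbound hxS)
  have hcomp := (hslope.comp hxtend).inv₀ hGx.ne'
  apply Filter.Tendsto.congr' ?_ hcomp
  filter_upwards [self_mem_nhdsWithin] with w hw
  have hwT : w ∈ Icc (covk k φ (-1)) (covk k φ 1) := hw.1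
  have hwz : w ≠ z := by simpa using hw.2
  have hcw : covk k φ (xinv w) = w := hbij.surjOn.rightInvOn_invFunOn hwT
  show (slope (covk k φ) x (xinv w))⁻¹ = slope xinv z w
  rw [slope_def_field, slope_def_field, hcw, hyx, inv_div]

end Stmt9Main

open Stmt9Aux Stmt9Aux2 Stmt9Main

/-- properties of the change of variables
`y(x) = sgn(x)·|φ(x)|^{1/(k+1)}` for a phase with vanishing derivatives up to
order `k` at the origin and `φ^{(k+1)} ≈ 1`. -/
theorem stmt9 (k : ℕ) (hk : 2 ≤ k) :
    ∃ c C : ℝ, 0 < c ∧ c < C ∧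
      ∀ φ : ℝ → ℝ,
        ContDiffOn ℝ (k+1) φ (Set.Icc (-1) 1) →
        (∀ j ≤ k, iteratedDerivWithin j φ (Set.Icc (-1) 1) 0 = 0) →
        (∀ x ∈ Set.Icc (-1:ℝ) 1,
          1/10 ≤ iteratedDerivWithin (k+1) φ (Set.Icc (-1) 1) x ∧
            iteratedDerivWithin (k+1) φ (Set.Icc (-1) 1) x ≤ 10) →
        StrictMonoOn (covk k φ) (Set.Icc (-1) 1) ∧
        ContDiffOn ℝ 1 (covk k φ) (Set.Icc (-1) 1) ∧
        Set.BijOn (covk k φ) (Set.Icc (-1) 1)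
          (Set.Icc (covk k φ (-1)) (covk k φ 1)) ∧
        ∃ xinv : ℝ → ℝ,
          Set.InvOn xinv (covk k φ) (Set.Icc (-1) 1)
            (Set.Icc (covk k φ (-1)) (covk k φ 1)) ∧
          ContDiffOn ℝ 1 xinv (Set.Icc (covk k φ (-1)) (covk k φ 1)) ∧
          (∀ z ∈ Set.Icc (covk k φ (-1)) (covk k φ 1), z ≠ 0 →
            derivWithin xinv (Set.Icc (covk k φ (-1)) (covk k φ 1)) z =
              (k+1) * |φ (xinv z)| ^ ((k:ℝ)/(k+1)) /
                |derivWithin φ (Set.Icc (-1) 1) (xinv z)|) ∧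
          (∀ z ∈ Set.Icc (covk k φ (-1)) (covk k φ 1),
            c ≤ derivWithin xinv (Set.Icc (covk k φ (-1)) (covk k φ 1)) z ∧
              derivWithin xinv (Set.Icc (covk k φ (-1)) (covk k φ 1)) z ≤ C) ∧
          derivWithin xinv (Set.Icc (covk k φ (-1)) (covk k φ 1)) 0 =
            ((k+1).factorial : ℝ) ^ ((1:ℝ)/(k+1)) *
              (iteratedDerivWithin (k+1) φ (Set.Icc (-1) 1) 0) ^ (-(1:ℝ)/(k+1)) := by
  refine ⟨(Gam k)⁻¹, (gam k)⁻¹, inv_pos.2 (Gam_pos k), ?_, ?_⟩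
  · exact inv_strictAnti₀ (gam_pos k) (gam_lt_Gam k)
  intro φ hφ hzero hbound
  have hmono := covk_mono hφ hzero hbound
  have hcd := covk_contDiff hφ hzero hbound
  have hbij := covk_bij hφ hzero hbound
  have hm1S : (-1:ℝ) ∈ Icc (-1:ℝ) 1 := by norm_num
  have h1S : (1:ℝ) ∈ Icc (-1:ℝ) 1 := by norm_num
  have hlt : covk k φ (-1) < covk k φ 1 := hmono hm1S h1S (by norm_num)
  have uT : UniqueDiffOn ℝ (Icc (covk k φ (-1)) (covk k φ 1)) := uniqueDiffOn_Icc hlt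
  have hmaps : MapsTo (Function.invFunOn (covk k φ) (Icc (-1:ℝ) 1))
      (Icc (covk k φ (-1)) (covk k φ 1)) (Icc (-1:ℝ) 1) :=
    fun z hz => Function.invFunOn_mem (hbij.surjOn hz)
  have hderW : ∀ z ∈ Icc (covk k φ (-1)) (covk k φ 1),
      derivWithin (Function.invFunOn (covk k φ) (Icc (-1:ℝ) 1))
        (Icc (covk k φ (-1)) (covk k φ 1)) z
        = (Gf k φ (Function.invFunOn (covk k φ) (Icc (-1:ℝ) 1) z))⁻¹ :=
    fun z hz => (xinv_hasDeriv hφ hzero hbound hz).derivWithin (uT z hz)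
  have hGpos : ∀ z ∈ Icc (covk k φ (-1)) (covk k φ 1),
      0 < Gf k φ (Function.invFunOn (covk k φ) (Icc (-1:ℝ) 1) z) :=
    fun z hz => lt_of_lt_of_le (gam_pos k) (G_mem hφ hzero hbound (hmaps hz)).1
  refine ⟨hmono, hcd, hbij, Function.invFunOn (covk k φ) (Icc (-1:ℝ) 1),
    hbij.invOn_invFunOn, ?_, ?_, ?_, ?_⟩
  · -- C¹ of the inverse
    have hcont : ContinuousOn
        (fun z => (Gf k φ (Function.invFunOn (covk k φ) (Icc (-1:ℝ) 1) z))⁻¹)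
        (Icc (covk k φ (-1)) (covk k φ 1)) := by
      apply ContinuousOn.inv₀
      · exact (Gf_cont hφ hzero hbound).comp (xinv_cont hφ hzero hbound) hmaps
      · exact fun z hz => (hGpos z hz).ne'
    have h := (contDiffOn_succ_iff_derivWithin (n := 0) uT
        (f := Function.invFunOn (covk k φ) (Icc (-1:ℝ) 1))).2
      ⟨fun z hz => (xinv_hasDeriv hφ hzero hbound hz).differentiableWithinAt,
        by simp, (contDiffOn_zero).2 (hcont.congr (fun z hz => hderW z hz))⟩
    simpa using h
  · -- derivative formula away from 0
    intro z hz hz0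
    set x := Function.invFunOn (covk k φ) (Icc (-1:ℝ) 1) z with hxdef
    have hxS : x ∈ Icc (-1:ℝ) 1 := hmaps hz
    have hyx : covk k φ x = z := hbij.surjOn.rightInvOn_invFunOn hz
    have hx0 : x ≠ 0 := by
      intro h
      apply hz0
      rw [← hyx, h, covk_zero]
    rw [hderW z hz]
    simp only [Gf, ← hxdef, if_neg hx0]
    have hB := bounds10 hφ hzero hbound hxS
    have haxp : 0 < |x| := abs_pos.2 hx0
    have hφpos : 0 < |φ x| := lt_of_lt_of_le (by positivity) hB.1.1
    have hdpos : 0 < |derivWithin φ (Icc (-1:ℝ) 1) x| := lt_of_lt_of_le (by positivity) hB.2.1.1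
    have hkne : ((k:ℝ)+1) ≠ 0 := by positivity
    have he : -((1:ℝ)/((k:ℝ)+1) - 1) = (k:ℝ)/((k:ℝ)+1) := by field_simp; ring
    have h2 : (|φ x| ^ ((1:ℝ)/((k:ℝ)+1) - 1))⁻¹ = |φ x| ^ ((k:ℝ)/((k:ℝ)+1)) := by
      rw [← Real.rpow_neg (abs_nonneg _), he]
    rw [mul_inv, mul_inv, h2, one_div, inv_inv]
    ring
  · -- bounds
    intro z hz
    rw [hderW z hz]
    have hmem := G_mem hφ hzero hbound (hmaps hz)
    constructor
    · exact inv_anti₀ (hGpos z hz) hmem.2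
    · exact inv_anti₀ (gam_pos k) hmem.1
  · -- derivative at 0
    have h0T : (0:ℝ) ∈ Icc (covk k φ (-1)) (covk k φ 1) := by
      have h1 : covk k φ (-1) < 0 := by
        have := hmono hm1S hS0 (by norm_num)
        rwa [covk_zero] at this
      have h2 : (0:ℝ) < covk k φ 1 := by
        have := hmono hS0 h1S (by norm_num)
        rwa [covk_zero] at this
      exact ⟨h1.le, h2.le⟩
    have hx0 : Function.invFunOn (covk k φ) (Icc (-1:ℝ) 1) 0 = 0 := by
      apply hbij.injOn (hmaps h0T) hS0
      rw [hbij.surjOn.rightInvOn_invFunOn h0T, covk_zero]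
    rw [hderW 0 h0T, hx0, Gf_zero_eq]
    have hD : 0 < iteratedDerivWithin (k+1) φ (Icc (-1:ℝ) 1) 0 :=
      lt_of_lt_of_le (by norm_num) (hbound 0 hS0).1
    rw [Real.div_rpow hD.le (by positivity), inv_div, div_eq_mul_inv,
      ← Real.rpow_neg hD.le, neg_div]
end
end

section
/- Let n, m ≥ 1 and let f: B₁(ℝⁿ) × B₁(ℝᵐ) → ℝᵐ be a smooth function with f(0,0) = 0 whose partial derivative A = ∂_y f(0,0) (an m×m matrix) is invertible, and suppose sup_{(x,y) ∈ B₁×B₁} ( |∂_x f| + |∂_x ∂_y f| + |∂_y² f| ) ≤ K for some K > 0. Then there exists r with 0 < r ≤ 1 and r ≥ min( 1, (1/4)(m+n)^{−6} |A|₂^{2−2m} |det A|² K^{−2} ), and a unique continuous function φ: B_r(ℝⁿ) → ℝᵐ such that φ(0) = 0, sup_{x ∈ B_r} |φ(x)| ≤ √r, and f(x, φ(x)) = 0 for all x ∈ B_r(ℝⁿ). -/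
open Metric Set

noncomputable section

variable {n m : ℕ}

/-- The partial derivative `∂_y f(x,y)`, taken within the unit ball of the
`y`-variable. -/
noncomputable def pdy (f : EuclideanSpace ℝ (Fin n) × EuclideanSpace ℝ (Fin m) →
    EuclideanSpace ℝ (Fin m)) (x : EuclideanSpace ℝ (Fin n))
    (y : EuclideanSpace ℝ (Fin m)) :
    EuclideanSpace ℝ (Fin m) →L[ℝ] EuclideanSpace ℝ (Fin m) :=
  fderivWithin ℝ (fun y' => f (x, y')) (closedBall 0 1) y

/-- The partial derivative `∂_x f(x,y)`, taken within the unit ball of the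
`x`-variable. -/
noncomputable def pdx (f : EuclideanSpace ℝ (Fin n) × EuclideanSpace ℝ (Fin m) →
    EuclideanSpace ℝ (Fin m)) (x : EuclideanSpace ℝ (Fin n))
    (y : EuclideanSpace ℝ (Fin m)) :
    EuclideanSpace ℝ (Fin n) →L[ℝ] EuclideanSpace ℝ (Fin m) :=
  fderivWithin ℝ (fun x' => f (x', y)) (closedBall 0 1) x

/-- The mixed partial derivative `∂_x ∂_y f(x,y)`. -/
noncomputable def pdxy (f : EuclideanSpace ℝ (Fin n) × EuclideanSpace ℝ (Fin m) →
    EuclideanSpace ℝ (Fin m)) (x : EuclideanSpace ℝ (Fin n))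
    (y : EuclideanSpace ℝ (Fin m)) :
    EuclideanSpace ℝ (Fin n) →L[ℝ]
      (EuclideanSpace ℝ (Fin m) →L[ℝ] EuclideanSpace ℝ (Fin m)) :=
  fderivWithin ℝ (fun x' => pdy f x' y) (closedBall 0 1) x

/-- The second partial derivative `∂_y² f(x,y)`. -/
noncomputable def pdyy (f : EuclideanSpace ℝ (Fin n) × EuclideanSpace ℝ (Fin m) →
    EuclideanSpace ℝ (Fin m)) (x : EuclideanSpace ℝ (Fin n))
    (y : EuclideanSpace ℝ (Fin m)) :
    EuclideanSpace ℝ (Fin m) →L[ℝ]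
      (EuclideanSpace ℝ (Fin m) →L[ℝ] EuclideanSpace ℝ (Fin m)) :=
  fderivWithin ℝ (fun y' => pdy f x y') (closedBall 0 1) y

/-- The matrix of the linear map `∂_y f(0,0)` in the standard basis. -/
noncomputable def pdyMat (f : EuclideanSpace ℝ (Fin n) × EuclideanSpace ℝ (Fin m) →
    EuclideanSpace ℝ (Fin m)) : Matrix (Fin m) (Fin m) ℝ :=
  Matrix.of fun i j => (pdy f 0 0) (EuclideanSpace.single j 1) i

/-- Frobenius (Hilbert–Schmidt) norm of a matrix. -/
noncomputable def frobNorm (A : Matrix (Fin m) (Fin m) ℝ) : ℝ :=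
  Real.sqrt (∑ i, ∑ j, (A i j) ^ 2)


section AuxLemmas
open Matrix

lemma frobNorm_nonneg {m : ℕ} (A : Matrix (Fin m) (Fin m) ℝ) : 0 ≤ frobNorm A :=
  Real.sqrt_nonneg _

lemma frobNorm_sq {m : ℕ} (A : Matrix (Fin m) (Fin m) ℝ) :
    frobNorm A ^ 2 = ∑ i, ∑ j, (A i j) ^ 2 :=
  Real.sq_sqrt (by positivity)

lemma trace_conjTranspose_mul_self {m : ℕ} (M : Matrix (Fin m) (Fin m) ℝ) :
    (Mᴴ * M).trace = frobNorm M ^ 2 := by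
  rw [frobNorm_sq]
  simp only [Matrix.trace, Matrix.diag, Matrix.mul_apply, Matrix.conjTranspose_apply,
    star_trivial, sq]
  exact Finset.sum_comm

lemma norm_toEuclideanLin_lower {m : ℕ} (hm : 1 ≤ m) (M : Matrix (Fin m) (Fin m) ℝ)
    (hd : M.det ≠ 0) (v : EuclideanSpace ℝ (Fin m)) :
    |M.det| * ‖v‖ ≤ frobNorm M ^ (m - 1) * ‖Matrix.toEuclideanLin M v‖ := by
  have hS : (Mᴴ * M).IsHermitian := Matrix.isHermitian_conjTranspose_mul_self M
  have hPSD := Matrix.posSemidef_conjTranspose_mul_self M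
  set lam := hS.eigenvalues with hlam
  set b := hS.eigenvectorBasis with hb
  have hlam0 : ∀ i, 0 ≤ lam i := hPSD.eigenvalues_nonneg
  have hprod : ∏ i, lam i = M.det ^ 2 := by
    have h1 := hS.det_eq_prod_eigenvalues
    rw [Matrix.det_mul, Matrix.det_conjTranspose, star_trivial, ← sq] at h1
    rw [hlam]
    convert h1.symm using 2
    rfl
  have htr : ∑ i, lam i = frobNorm M ^ 2 := by
    have h2 : (Mᴴ * M).trace = (Matrix.diagonal (RCLike.ofReal ∘ hS.eigenvalues)
        : Matrix (Fin m) (Fin m) ℝ).trace := by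
      conv_lhs => rw [hS.spectral_theorem]
      rw [Unitary.conjStarAlgAut_apply, Matrix.trace_mul_cycle]
      rw [Unitary.star_mul_self_of_mem hS.eigenvectorUnitary.prop, Matrix.one_mul]
    rw [trace_conjTranspose_mul_self] at h2
    rw [h2, Matrix.trace_diagonal]
    rfl
  have hlampos : ∀ i, 0 < lam i := by
    intro i
    rcases (hlam0 i).lt_or_eq with h | h
    · exact h
    · exfalso
      have : ∏ j, lam j = 0 := Finset.prod_eq_zero (Finset.mem_univ i) h.symm
      rw [hprod] at this
      exact hd (by nlinarith)
  have hlamle : ∀ j, lam j ≤ frobNorm M ^ 2 := by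
    intro j
    rw [← htr]
    exact Finset.single_le_sum (fun i _ => hlam0 i) (Finset.mem_univ j)
  have key : ∀ j, M.det ^ 2 ≤ lam j * (frobNorm M ^ 2) ^ (m - 1) := by
    intro j
    rw [← hprod, ← Finset.mul_prod_erase _ _ (Finset.mem_univ j)]
    refine mul_le_mul_of_nonneg_left ?_ (hlam0 j)
    calc ∏ i ∈ Finset.univ.erase j, lam i
        ≤ ∏ _i ∈ Finset.univ.erase j, frobNorm M ^ 2 :=
          Finset.prod_le_prod (fun i _ => hlam0 i) (fun i _ => hlamle i)
      _ = (frobNorm M ^ 2) ^ (m - 1) := by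
          rw [Finset.prod_const,
            Finset.card_erase_of_mem (Finset.mem_univ j), Finset.card_univ, Fintype.card_fin]
  set T := Matrix.toEuclideanLin M with hT
  have hTS : ∀ w, Matrix.toEuclideanLin (Mᴴ * M) w = LinearMap.adjoint T (T w) := by
    intro w
    rw [← Matrix.toEuclideanLin_conjTranspose_eq_adjoint]
    simp [hT, Matrix.toEuclideanLin_apply, Matrix.toLin'_apply, Matrix.mulVec_mulVec]
  have hinner : ∀ w, ‖T w‖ ^ 2 = inner ℝ w (Matrix.toEuclideanLin (Mᴴ * M) w) := by
    intro w
    rw [hTS, LinearMap.adjoint_inner_right, real_inner_self_eq_norm_sq]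
  have hSb : ∀ i, Matrix.toEuclideanLin (Mᴴ * M) (b i) = lam i • b i := by
    intro i
    have h6 := hS.mulVec_eigenvectorBasis i
    rw [Matrix.toEuclideanLin_apply]
    apply (WithLp.equiv 2 (Fin m → ℝ)).injective
    change (Mᴴ * M) *ᵥ (WithLp.equiv 2 (Fin m → ℝ)) (b i) = (WithLp.equiv 2 (Fin m → ℝ)) (lam i • b i)
    rw [show (WithLp.equiv 2 (Fin m → ℝ)) (b i) = ⇑(b i) from rfl]
    rw [h6]
    rfl
  have hexp : inner ℝ v (Matrix.toEuclideanLin (Mᴴ * M) v)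
      = ∑ i, lam i * (b.repr v i) ^ 2 := by
    conv_lhs => rw [← b.sum_repr v]
    rw [map_sum, inner_sum]
    refine Finset.sum_congr rfl (fun i _ => ?_)
    rw [LinearMap.map_smul, hSb i, real_inner_smul_right, real_inner_smul_right]
    have h7 : (inner ℝ (∑ j, b.repr v j • b j) (b i) : ℝ) = b.repr v i := by
      rw [b.sum_repr v, real_inner_comm]
      exact (b.repr_apply_apply v i).symm
    rw [h7]; ring
  have hTv : ‖T v‖ ^ 2 = ∑ i, lam i * (b.repr v i) ^ 2 := by rw [hinner, hexp]
  have hv2 : ‖v‖ ^ 2 = ∑ i, (b.repr v i) ^ 2 := by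
    rw [← b.repr.norm_map v, EuclideanSpace.norm_eq, Real.sq_sqrt (by positivity)]
    refine Finset.sum_congr rfl (fun i _ => ?_)
    rw [Real.norm_eq_abs, sq_abs]
  have hineq : (|M.det| * ‖v‖) ^ 2 ≤ (frobNorm M ^ (m - 1) * ‖T v‖) ^ 2 := by
    calc (|M.det| * ‖v‖) ^ 2 = ∑ i, M.det ^ 2 * (b.repr v i) ^ 2 := by
          rw [mul_pow, sq_abs, hv2, Finset.mul_sum]
      _ ≤ ∑ i, (frobNorm M ^ 2) ^ (m - 1) * (lam i * (b.repr v i) ^ 2) :=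
          Finset.sum_le_sum (fun i _ => by
            have h8 := mul_le_mul_of_nonneg_right (key i) (sq_nonneg (b.repr v i))
            nlinarith [h8])
      _ = (frobNorm M ^ (m - 1)) ^ 2 * ∑ i, lam i * (b.repr v i) ^ 2 := by
          rw [← Finset.mul_sum, ← pow_mul, ← pow_mul, Nat.mul_comm]
      _ = (frobNorm M ^ (m - 1) * ‖T v‖) ^ 2 := by rw [mul_pow, hTv]
  have h5 := Real.sqrt_le_sqrt hineq
  rwa [Real.sqrt_sq (by positivity),
    Real.sqrt_sq (mul_nonneg (pow_nonneg (frobNorm_nonneg M) _) (norm_nonneg _))] at h5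

lemma frobNorm_pos {m : ℕ} (hm : 1 ≤ m) (M : Matrix (Fin m) (Fin m) ℝ) (hd : M.det ≠ 0) :
    0 < frobNorm M := by
  rcases (frobNorm_nonneg M).lt_or_eq with h | h
  · exact h
  · exfalso
    haveI : Nonempty (Fin m) := ⟨⟨0, hm⟩⟩
    apply hd
    have h0 : ∑ i, ∑ j, (M i j) ^ 2 = 0 := by
      have := frobNorm_sq M
      rw [← h] at this
      simpa using this.symm
    have hM : M = 0 := by
      ext i j
      have h1 : ∀ i ∈ Finset.univ, ∑ j, (M i j) ^ 2 = 0 := by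
        intro i _
        have := (Finset.sum_eq_zero_iff_of_nonneg (fun i _ => by positivity)).mp h0
        exact this i (Finset.mem_univ i)
      have h2 := (Finset.sum_eq_zero_iff_of_nonneg (fun j _ => by positivity)).mp
        (h1 i (Finset.mem_univ i)) j (Finset.mem_univ j)
      simpa using pow_eq_zero_iff (n := 2) (by norm_num) |>.mp h2
    rw [hM, Matrix.det_zero]

lemma clm_inv {m : ℕ} (A : EuclideanSpace ℝ (Fin m) →L[ℝ] EuclideanSpace ℝ (Fin m))
    (c : ℝ) (hc : 0 < c) (h : ∀ v, c * ‖v‖ ≤ ‖A v‖) :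
    ∃ B : EuclideanSpace ℝ (Fin m) →L[ℝ] EuclideanSpace ℝ (Fin m),
      (∀ v, B (A v) = v) ∧ (∀ w, A (B w) = w) ∧ ∀ w, ‖B w‖ ≤ c⁻¹ * ‖w‖ := by
  have hinj : Function.Injective A := by
    intro a b hab
    have h1 := h (a - b)
    rw [map_sub, hab, sub_self, norm_zero] at h1
    have h2 : ‖a - b‖ = 0 := le_antisymm (by nlinarith [norm_nonneg (a - b)]) (norm_nonneg _)
    exact sub_eq_zero.mp (norm_eq_zero.mp h2)
  have hsurj : Function.Surjective A :=
    (LinearMap.injective_iff_surjective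
      (f := (A : EuclideanSpace ℝ (Fin m) →ₗ[ℝ] EuclideanSpace ℝ (Fin m)))).mp hinj
  let e := LinearEquiv.ofBijective
    (A : EuclideanSpace ℝ (Fin m) →ₗ[ℝ] EuclideanSpace ℝ (Fin m)) ⟨hinj, hsurj⟩
  let B := LinearMap.toContinuousLinearMap
    (e.symm : EuclideanSpace ℝ (Fin m) →ₗ[ℝ] EuclideanSpace ℝ (Fin m))
  have hBA : ∀ v, B (A v) = v := fun v => e.symm_apply_apply v
  have hAB : ∀ w, A (B w) = w := fun w => e.apply_symm_apply w
  refine ⟨B, hBA, hAB, fun w => ?_⟩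
  have h3 := h (B w)
  rw [hAB w] at h3
  rw [inv_mul_eq_div, le_div_iff₀ hc, mul_comm]
  exact h3

end AuxLemmas

section Aux2
open Matrix

lemma pdy_matrix {n m : ℕ}
    (f : EuclideanSpace ℝ (Fin n) × EuclideanSpace ℝ (Fin m) → EuclideanSpace ℝ (Fin m))
    (v : EuclideanSpace ℝ (Fin m)) :
    pdy f (0 : EuclideanSpace ℝ (Fin n)) 0 v = Matrix.toEuclideanLin (pdyMat f) v := by
  have hlin : ((pdy f (0 : EuclideanSpace ℝ (Fin n)) 0 : _ →L[ℝ] _) : _ →ₗ[ℝ] _)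
      = Matrix.toEuclideanLin (pdyMat f) := by
    apply Module.Basis.ext (EuclideanSpace.basisFun (Fin m) ℝ).toBasis
    intro j
    rw [OrthonormalBasis.coe_toBasis, EuclideanSpace.basisFun_apply]
    ext i
    simp only [ContinuousLinearMap.coe_coe, Matrix.toEuclideanLin_apply]
    show (pdy f 0 0) (EuclideanSpace.single j 1) i
      = (pdyMat f *ᵥ (WithLp.equiv 2 (Fin m → ℝ)) (EuclideanSpace.single j 1)) i
    rw [show (WithLp.equiv 2 (Fin m → ℝ)) (EuclideanSpace.single j 1)
      = ⇑(EuclideanSpace.single j (1:ℝ)) from rfl]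
    simp only [Matrix.mulVec, dotProduct, EuclideanSpace.single_apply]
    rw [Finset.sum_eq_single j (fun k _ hk => by simp [hk]) (by simp)]
    simp [pdyMat]
  exact LinearMap.congr_fun hlin v

end Aux2

set_option maxHeartbeats 2000000 in
set_option synthInstance.maxHeartbeats 400000 in
/-- quantitative implicit function theorem with an explicit
lower bound on the radius of the domain of the implicit function. -/
theorem stmt10 (n m : ℕ) (hn : 1 ≤ n) (hm : 1 ≤ m) (K : ℝ) (hK : 0 < K)
    (f : EuclideanSpace ℝ (Fin n) × EuclideanSpace ℝ (Fin m) →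
      EuclideanSpace ℝ (Fin m))
    (hf : ContDiffOn ℝ (⊤ : ℕ∞) f
      ((closedBall 0 1 : Set (EuclideanSpace ℝ (Fin n))) ×ˢ
        (closedBall 0 1 : Set (EuclideanSpace ℝ (Fin m)))))
    (hf0 : f (0, 0) = 0)
    (hA : (pdyMat f).det ≠ 0)
    (hbd : ∀ x ∈ closedBall (0 : EuclideanSpace ℝ (Fin n)) 1,
      ∀ y ∈ closedBall (0 : EuclideanSpace ℝ (Fin m)) 1,
        ‖pdx f x y‖ + ‖pdxy f x y‖ + ‖pdyy f x y‖ ≤ K) :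
    ∃ r : ℝ, 0 < r ∧ r ≤ 1 ∧
      min 1 ((1/4) * ((m + n : ℝ)) ^ (-(6:ℝ)) *
        (frobNorm (pdyMat f)) ^ ((2:ℝ) - 2 * m) * |(pdyMat f).det| ^ 2 *
          K ^ (-(2:ℝ))) ≤ r ∧
      ∃ φ : EuclideanSpace ℝ (Fin n) → EuclideanSpace ℝ (Fin m),
        ContinuousOn φ (closedBall 0 r) ∧ φ 0 = 0 ∧
        (∀ x ∈ closedBall (0 : EuclideanSpace ℝ (Fin n)) r,
          ‖φ x‖ ≤ Real.sqrt r ∧ f (x, φ x) = 0) ∧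
        ∀ φ' : EuclideanSpace ℝ (Fin n) → EuclideanSpace ℝ (Fin m),
          ContinuousOn φ' (closedBall 0 r) → φ' 0 = 0 →
          (∀ x ∈ closedBall (0 : EuclideanSpace ℝ (Fin n)) r,
            ‖φ' x‖ ≤ Real.sqrt r ∧ f (x, φ' x) = 0) →
          ∀ x ∈ closedBall (0 : EuclideanSpace ℝ (Fin n)) r, φ' x = φ x := by
  classical
  -- ## setup
  have h01n : (0 : EuclideanSpace ℝ (Fin n)) ∈ closedBall (0 : EuclideanSpace ℝ (Fin n)) 1 :=
    mem_closedBall_self zero_le_one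
  have h01m : (0 : EuclideanSpace ℝ (Fin m)) ∈ closedBall (0 : EuclideanSpace ℝ (Fin m)) 1 :=
    mem_closedBall_self zero_le_one
  have hconvn : Convex ℝ (closedBall (0 : EuclideanSpace ℝ (Fin n)) 1) := convex_closedBall _ _
  have hconvm : Convex ℝ (closedBall (0 : EuclideanSpace ℝ (Fin m)) 1) := convex_closedBall _ _
  have hudn : UniqueDiffOn ℝ (closedBall (0 : EuclideanSpace ℝ (Fin n)) 1) :=
    uniqueDiffOn_convex hconvn
      (by rw [interior_closedBall _ one_ne_zero]; exact ⟨0, mem_ball_self one_pos⟩)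
  have hudm : UniqueDiffOn ℝ (closedBall (0 : EuclideanSpace ℝ (Fin m)) 1) :=
    uniqueDiffOn_convex hconvm
      (by rw [interior_closedBall _ one_ne_zero]; exact ⟨0, mem_ball_self one_pos⟩)
  have hudS : UniqueDiffOn ℝ
      ((closedBall 0 1 : Set (EuclideanSpace ℝ (Fin n))) ×ˢ
        (closedBall 0 1 : Set (EuclideanSpace ℝ (Fin m)))) := hudn.prod hudm
  have hfdiff : DifferentiableOn ℝ f
      ((closedBall 0 1 : Set (EuclideanSpace ℝ (Fin n))) ×ˢ
        (closedBall 0 1 : Set (EuclideanSpace ℝ (Fin m)))) := hf.differentiableOn (by simp)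
  have hFdiff : DifferentiableOn ℝ
      (fderivWithin ℝ f ((closedBall 0 1 : Set (EuclideanSpace ℝ (Fin n))) ×ˢ
        (closedBall 0 1 : Set (EuclideanSpace ℝ (Fin m)))))
      ((closedBall 0 1 : Set (EuclideanSpace ℝ (Fin n))) ×ˢ
        (closedBall 0 1 : Set (EuclideanSpace ℝ (Fin m)))) :=
    (hf.fderivWithin hudS (m := 1) (by exact WithTop.coe_le_coe.mpr le_top)).differentiableOn one_ne_zero
  -- ## differentiability of the slices
  have hdiffy : ∀ x ∈ closedBall (0 : EuclideanSpace ℝ (Fin n)) 1,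
      ∀ y ∈ closedBall (0 : EuclideanSpace ℝ (Fin m)) 1,
      DifferentiableWithinAt ℝ (fun y' => f (x, y')) (closedBall 0 1) y := by
    intro x hx y hy
    have hi : DifferentiableWithinAt ℝ
        (fun y' : EuclideanSpace ℝ (Fin m) => (x, y')) (closedBall 0 1) y :=
      (differentiableWithinAt_const x).prodMk differentiableWithinAt_id
    exact (hfdiff (x, y) ⟨hx, hy⟩).comp y hi (fun y' hy' => ⟨hx, hy'⟩)
  have hdiffx : ∀ x ∈ closedBall (0 : EuclideanSpace ℝ (Fin n)) 1,
      ∀ y ∈ closedBall (0 : EuclideanSpace ℝ (Fin m)) 1,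
      DifferentiableWithinAt ℝ (fun x' => f (x', y)) (closedBall 0 1) x := by
    intro x hx y hy
    have hi : DifferentiableWithinAt ℝ
        (fun x' : EuclideanSpace ℝ (Fin n) => (x', y)) (closedBall 0 1) x :=
      differentiableWithinAt_id.prodMk (differentiableWithinAt_const y)
    exact (hfdiff (x, y) ⟨hx, hy⟩).comp x hi (fun x' hx' => Set.mk_mem_prod hx' hy)
  -- ## pdy as a slice of the full derivative
  have hpdy_eq : ∀ x ∈ closedBall (0 : EuclideanSpace ℝ (Fin n)) 1,
      ∀ y ∈ closedBall (0 : EuclideanSpace ℝ (Fin m)) 1,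
      pdy f x y = (fderivWithin ℝ f ((closedBall 0 1 : Set (EuclideanSpace ℝ (Fin n))) ×ˢ
        (closedBall 0 1 : Set (EuclideanSpace ℝ (Fin m)))) (x, y)).comp
        (ContinuousLinearMap.inr ℝ (EuclideanSpace ℝ (Fin n)) (EuclideanSpace ℝ (Fin m))) := by
    intro x hx y hy
    have h1 := (hfdiff (x, y) ⟨hx, hy⟩).hasFDerivWithinAt
    have h2 : HasFDerivWithinAt (fun y' : EuclideanSpace ℝ (Fin m) => (x, y'))
        (ContinuousLinearMap.inr ℝ (EuclideanSpace ℝ (Fin n)) (EuclideanSpace ℝ (Fin m)))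
        (closedBall 0 1) y := by
      have h2' := HasFDerivWithinAt.prodMk (hasFDerivWithinAt_const (𝕜 := ℝ) x y
        (closedBall (0 : EuclideanSpace ℝ (Fin m)) 1))
        (hasFDerivWithinAt_id y (closedBall (0 : EuclideanSpace ℝ (Fin m)) 1))
      have h3 : (ContinuousLinearMap.inr ℝ (EuclideanSpace ℝ (Fin n))
          (EuclideanSpace ℝ (Fin m)))
          = ((0 : EuclideanSpace ℝ (Fin m) →L[ℝ] EuclideanSpace ℝ (Fin n))).prod
            (ContinuousLinearMap.id ℝ (EuclideanSpace ℝ (Fin m))) := by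
        ext z <;> simp
      rw [h3]
      exact h2'
    have h4 := h1.comp y h2 (fun y' hy' => ⟨hx, hy'⟩)
    exact h4.fderivWithin (hudm y hy)
  -- ## differentiability of x' ↦ pdy f x' y and y' ↦ pdy f x y'
  have hdiffpdyx : ∀ y ∈ closedBall (0 : EuclideanSpace ℝ (Fin m)) 1,
      ∀ x ∈ closedBall (0 : EuclideanSpace ℝ (Fin n)) 1,
      DifferentiableWithinAt ℝ (fun x' => pdy f x' y) (closedBall 0 1) x := by
    intro y hy x hx
    have h1 : DifferentiableWithinAt ℝ
        (fun x' : EuclideanSpace ℝ (Fin n) =>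
          fderivWithin ℝ f ((closedBall 0 1 : Set (EuclideanSpace ℝ (Fin n))) ×ˢ
            (closedBall 0 1 : Set (EuclideanSpace ℝ (Fin m)))) (x', y)) (closedBall 0 1) x :=
      (hFdiff (x, y) ⟨hx, hy⟩).comp x
        (differentiableWithinAt_id.prodMk (differentiableWithinAt_const y))
        (fun x' hx' => Set.mk_mem_prod hx' hy)
    have hG := h1.clm_comp (differentiableWithinAt_const
      (ContinuousLinearMap.inr ℝ (EuclideanSpace ℝ (Fin n)) (EuclideanSpace ℝ (Fin m))))
    exact hG.congr (fun x' hx' => hpdy_eq x' hx' y hy) (hpdy_eq x hx y hy)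
  have hdiffpdyy : ∀ x ∈ closedBall (0 : EuclideanSpace ℝ (Fin n)) 1,
      ∀ y ∈ closedBall (0 : EuclideanSpace ℝ (Fin m)) 1,
      DifferentiableWithinAt ℝ (fun y' => pdy f x y') (closedBall 0 1) y := by
    intro x hx y hy
    have h1 : DifferentiableWithinAt ℝ
        (fun y' : EuclideanSpace ℝ (Fin m) =>
          fderivWithin ℝ f ((closedBall 0 1 : Set (EuclideanSpace ℝ (Fin n))) ×ˢ
            (closedBall 0 1 : Set (EuclideanSpace ℝ (Fin m)))) (x, y')) (closedBall 0 1) y :=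
      (hFdiff (x, y) ⟨hx, hy⟩).comp y
        ((differentiableWithinAt_const x).prodMk differentiableWithinAt_id)
        (fun y' hy' => ⟨hx, hy'⟩)
    have hG := h1.clm_comp (differentiableWithinAt_const
      (ContinuousLinearMap.inr ℝ (EuclideanSpace ℝ (Fin n)) (EuclideanSpace ℝ (Fin m))))
    exact hG.congr (fun y' hy' => hpdy_eq x hx y' hy') (hpdy_eq x hx y hy)
  -- ## bounds from hbd
  have hKx : ∀ x ∈ closedBall (0 : EuclideanSpace ℝ (Fin n)) 1,
      ∀ y ∈ closedBall (0 : EuclideanSpace ℝ (Fin m)) 1, ‖pdx f x y‖ ≤ K := by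
    intro x hx y hy
    have h1 := hbd x hx y hy
    have h2 := norm_nonneg (pdxy f x y); have h3 := norm_nonneg (pdyy f x y)
    linarith
  have hKxy : ∀ x ∈ closedBall (0 : EuclideanSpace ℝ (Fin n)) 1,
      ∀ y ∈ closedBall (0 : EuclideanSpace ℝ (Fin m)) 1, ‖pdxy f x y‖ ≤ K := by
    intro x hx y hy
    have h1 := hbd x hx y hy
    have h2 := norm_nonneg (pdx f x y); have h3 := norm_nonneg (pdyy f x y)
    linarith
  have hKyy : ∀ x ∈ closedBall (0 : EuclideanSpace ℝ (Fin n)) 1,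
      ∀ y ∈ closedBall (0 : EuclideanSpace ℝ (Fin m)) 1, ‖pdyy f x y‖ ≤ K := by
    intro x hx y hy
    have h1 := hbd x hx y hy
    have h2 := norm_nonneg (pdx f x y); have h3 := norm_nonneg (pdxy f x y)
    linarith
  -- ## mean value estimates
  have hfx : ∀ y ∈ closedBall (0 : EuclideanSpace ℝ (Fin m)) 1,
      ∀ x₁ ∈ closedBall (0 : EuclideanSpace ℝ (Fin n)) 1,
      ∀ x₂ ∈ closedBall (0 : EuclideanSpace ℝ (Fin n)) 1,
      ‖f (x₁, y) - f (x₂, y)‖ ≤ K * ‖x₁ - x₂‖ := by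
    intro y hy x₁ h₁ x₂ h₂
    exact hconvn.norm_image_sub_le_of_norm_hasFDerivWithin_le
      (fun x hx => (hdiffx x hx y hy).hasFDerivWithinAt)
      (fun x hx => hKx x hx y hy) h₂ h₁
  have hpdy_lip : ∀ x ∈ closedBall (0 : EuclideanSpace ℝ (Fin n)) 1,
      ∀ y ∈ closedBall (0 : EuclideanSpace ℝ (Fin m)) 1,
      ‖pdy f x y - pdy f 0 0‖ ≤ K * ‖x‖ + K * ‖y‖ := by
    intro x hx y hy
    have e1 : ‖pdy f x y - pdy f x 0‖ ≤ K * ‖y‖ := by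
      have h5 := hconvm.norm_image_sub_le_of_norm_hasFDerivWithin_le
        (fun y' hy' => (hdiffpdyy x hx y' hy').hasFDerivWithinAt)
        (fun y' hy' => hKyy x hx y' hy') h01m hy
      simpa using h5
    have e2 : ‖pdy f x 0 - pdy f 0 0‖ ≤ K * ‖x‖ := by
      have h5 := hconvn.norm_image_sub_le_of_norm_hasFDerivWithin_le
        (fun x' hx' => (hdiffpdyx 0 h01m x' hx').hasFDerivWithinAt)
        (fun x' hx' => hKxy x' hx' 0 h01m) h01n hx
      simpa using h5
    have e3 : pdy f x y - pdy f 0 0 = (pdy f x y - pdy f x 0) + (pdy f x 0 - pdy f 0 0) := by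
      abel
    calc ‖pdy f x y - pdy f 0 0‖
        ≤ ‖pdy f x y - pdy f x 0‖ + ‖pdy f x 0 - pdy f 0 0‖ := by rw [e3]; exact norm_add_le _ _
      _ ≤ K * ‖x‖ + K * ‖y‖ := by linarith
  -- ## the inverse of A = pdy f 0 0
  have hfr : 0 < frobNorm (pdyMat f) := frobNorm_pos hm (pdyMat f) hA
  have hdet : 0 < |(pdyMat f).det| := abs_pos.mpr hA
  have hlow : ∀ v, |(pdyMat f).det| / frobNorm (pdyMat f) ^ (m - 1) * ‖v‖ ≤ ‖pdy f 0 0 v‖ := by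
    intro v
    have h1 := norm_toEuclideanLin_lower hm (pdyMat f) hA v
    rw [← pdy_matrix f v] at h1
    rw [div_mul_eq_mul_div, div_le_iff₀ (pow_pos hfr _)]
    linarith [h1]
  obtain ⟨B, hBA, hAB, hBnorm⟩ := clm_inv (pdy f 0 0)
    (|(pdyMat f).det| / frobNorm (pdyMat f) ^ (m - 1))
    (div_pos hdet (pow_pos hfr _)) hlow
  set α : ℝ := frobNorm (pdyMat f) ^ (m - 1) / |(pdyMat f).det| with hαdef
  have hαpos : 0 < α := div_pos (pow_pos hfr _) hdet
  have hBnorm' : ∀ w, ‖B w‖ ≤ α * ‖w‖ := by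
    intro w
    have h1 := hBnorm w
    rwa [inv_div] at h1
  -- ## choice of the radius
  set r : ℝ := min 1 (1 / (9 * α ^ 2 * K ^ 2)) with hrdef
  have hr0 : 0 < r := lt_min one_pos (by positivity)
  have hr1 : r ≤ 1 := min_le_left _ _
  set ρ : ℝ := Real.sqrt r with hρdef
  have hρpos : 0 < ρ := Real.sqrt_pos.mpr hr0
  have hρsq : ρ ^ 2 = r := Real.sq_sqrt hr0.le
  have hρ1 : ρ ≤ 1 := by
    rw [show (1 : ℝ) = Real.sqrt 1 by simp [Real.sqrt_one]]
    exact Real.sqrt_le_sqrt hr1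
  have hrρ : r ≤ ρ := by nlinarith
  have hkey : 3 * (α * K) * ρ ≤ 1 := by
    have h9 : ρ ≤ Real.sqrt (1 / (9 * α ^ 2 * K ^ 2)) := Real.sqrt_le_sqrt (min_le_right _ _)
    have h10 : Real.sqrt (1 / (9 * α ^ 2 * K ^ 2)) = 1 / (3 * α * K) := by
      rw [show 1 / (9 * α ^ 2 * K ^ 2) = (1 / (3 * α * K)) ^ 2 by field_simp; ring]
      exact Real.sqrt_sq (by positivity)
    rw [h10] at h9
    rw [div_eq_mul_inv] at h9
    have h11 : 0 < 3 * α * K := by positivity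
    calc 3 * (α * K) * ρ ≤ 3 * (α * K) * (1 * (3 * α * K)⁻¹) :=
          mul_le_mul_of_nonneg_left h9 (by positivity)
      _ = 1 := by field_simp
  have hsubn : closedBall (0 : EuclideanSpace ℝ (Fin n)) r ⊆ closedBall 0 1 :=
    closedBall_subset_closedBall hr1
  have hsubm : closedBall (0 : EuclideanSpace ℝ (Fin m)) ρ ⊆ closedBall 0 1 :=
    closedBall_subset_closedBall hρ1
  have h0ρ : (0 : EuclideanSpace ℝ (Fin m)) ∈ closedBall 0 ρ := mem_closedBall_self hρpos.le
  have h0r : (0 : EuclideanSpace ℝ (Fin n)) ∈ closedBall 0 r := mem_closedBall_self hr0.le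
  have hfx0 : ∀ x ∈ closedBall (0 : EuclideanSpace ℝ (Fin n)) r, ‖f (x, 0)‖ ≤ K * ‖x‖ := by
    intro x hx
    have h1 := hfx 0 h01m x (hsubn hx) 0 h01n
    rw [hf0] at h1
    simpa using h1
  -- ## the contraction
  set T : EuclideanSpace ℝ (Fin n) → EuclideanSpace ℝ (Fin m) → EuclideanSpace ℝ (Fin m) :=
    fun x y => y - B (f (x, y)) with hTdef
  have hTsub : ∀ x ∈ closedBall (0 : EuclideanSpace ℝ (Fin n)) r,
      ∀ y₁ ∈ closedBall (0 : EuclideanSpace ℝ (Fin m)) ρ,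
      ∀ y₂ ∈ closedBall (0 : EuclideanSpace ℝ (Fin m)) ρ,
      ‖T x y₁ - T x y₂‖ ≤ 2 / 3 * ‖y₁ - y₂‖ := by
    intro x hx y₁ hy₁ y₂ hy₂
    have hxB : x ∈ closedBall (0 : EuclideanSpace ℝ (Fin n)) 1 := hsubn hx
    have hxr : ‖x‖ ≤ r := mem_closedBall_zero_iff.mp hx
    have hg : ∀ y ∈ closedBall (0 : EuclideanSpace ℝ (Fin m)) ρ,
        HasFDerivWithinAt (fun y' => f (x, y') - (pdy f 0 0) y')
          (pdy f x y - pdy f 0 0) (closedBall 0 ρ) y := by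
      intro y hy
      have h1 : HasFDerivWithinAt (fun y' => f (x, y')) (pdy f x y) (closedBall 0 ρ) y :=
        ((hdiffy x hxB y (hsubm hy)).hasFDerivWithinAt).mono hsubm
      exact h1.sub ((pdy f 0 0).hasFDerivAt.hasFDerivWithinAt)
    have hgl : ‖(f (x, y₁) - (pdy f 0 0) y₁) - (f (x, y₂) - (pdy f 0 0) y₂)‖
        ≤ 2 * K * ρ * ‖y₁ - y₂‖ := (convex_closedBall (0 : EuclideanSpace ℝ (Fin m)) ρ)
      |>.norm_image_sub_le_of_norm_hasFDerivWithin_le hg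
      (fun y hy => by
        have h2 := hpdy_lip x hxB y (hsubm hy)
        have hyρ : ‖y‖ ≤ ρ := mem_closedBall_zero_iff.mp hy
        have h6 : K * ‖x‖ + K * ‖y‖ ≤ 2 * K * ρ := by
          nlinarith [mul_le_mul_of_nonneg_left hxr hK.le,
            mul_le_mul_of_nonneg_left hyρ hK.le, mul_le_mul_of_nonneg_left hrρ hK.le]
        linarith) hy₂ hy₁
    have hTd : T x y₁ - T x y₂
        = B ((pdy f 0 0) (y₁ - y₂) - (f (x, y₁) - f (x, y₂))) := by
      have h3 : B ((pdy f 0 0) (y₁ - y₂) - (f (x, y₁) - f (x, y₂)))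
          = (y₁ - y₂) - (B (f (x, y₁)) - B (f (x, y₂))) := by
        rw [map_sub, hBA, map_sub]
      rw [h3]
      simp only [hTdef]
      abel
    have h5 : (pdy f 0 0) (y₁ - y₂) - (f (x, y₁) - f (x, y₂))
        = -((f (x, y₁) - (pdy f 0 0) y₁) - (f (x, y₂) - (pdy f 0 0) y₂)) := by
      rw [map_sub]; abel
    calc ‖T x y₁ - T x y₂‖
        = ‖B ((pdy f 0 0) (y₁ - y₂) - (f (x, y₁) - f (x, y₂)))‖ := by rw [hTd]
      _ ≤ α * ‖(pdy f 0 0) (y₁ - y₂) - (f (x, y₁) - f (x, y₂))‖ := hBnorm' _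
      _ = α * ‖(f (x, y₁) - (pdy f 0 0) y₁) - (f (x, y₂) - (pdy f 0 0) y₂)‖ := by
            rw [h5, norm_neg]
      _ ≤ α * (2 * K * ρ * ‖y₁ - y₂‖) := mul_le_mul_of_nonneg_left hgl hαpos.le
      _ ≤ 2 / 3 * ‖y₁ - y₂‖ := by nlinarith [norm_nonneg (y₁ - y₂),
          mul_le_mul_of_nonneg_right hkey (norm_nonneg (y₁ - y₂))]
  have hTmem : ∀ x ∈ closedBall (0 : EuclideanSpace ℝ (Fin n)) r,
      ∀ y ∈ closedBall (0 : EuclideanSpace ℝ (Fin m)) ρ,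
      T x y ∈ closedBall (0 : EuclideanSpace ℝ (Fin m)) ρ := by
    intro x hx y hy
    rw [mem_closedBall_zero_iff]
    have h1 : ‖T x y - T x 0‖ ≤ 2 / 3 * ‖y - 0‖ := hTsub x hx y hy 0 h0ρ
    have h2 : ‖T x 0‖ ≤ α * (K * ‖x‖) := by
      have h3 : T x 0 = -(B (f (x, 0))) := by simp only [hTdef]; abel
      rw [h3, norm_neg]
      calc ‖B (f (x, 0))‖ ≤ α * ‖f (x, 0)‖ := hBnorm' _
        _ ≤ α * (K * ‖x‖) := mul_le_mul_of_nonneg_left (hfx0 x hx) hαpos.le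
    have hxr : ‖x‖ ≤ r := mem_closedBall_zero_iff.mp hx
    have hyρ : ‖y‖ ≤ ρ := mem_closedBall_zero_iff.mp hy
    have h4 : ‖T x y‖ ≤ ‖T x y - T x 0‖ + ‖T x 0‖ := by
      have := norm_add_le (T x y - T x 0) (T x 0)
      simpa using this
    have h6 : α * (K * ‖x‖) ≤ α * K * ρ * ρ := by
      nlinarith [mul_le_mul_of_nonneg_left hxr (by positivity : (0:ℝ) ≤ α * K), hρsq]
    have h7 : α * K * ρ ≤ 1 / 3 := by nlinarith
    have h8 : α * K * ρ * ρ ≤ 1 / 3 * ρ := by nlinarith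
    rw [sub_zero] at h1
    linarith
  -- ## fixed points
  have hfix : ∀ x ∈ closedBall (0 : EuclideanSpace ℝ (Fin n)) r,
      ∃ y, y ∈ closedBall (0 : EuclideanSpace ℝ (Fin m)) ρ ∧ T x y = y := by
    intro x hx
    haveI : Nonempty (closedBall (0 : EuclideanSpace ℝ (Fin m)) ρ) := ⟨⟨0, h0ρ⟩⟩
    haveI : CompleteSpace (closedBall (0 : EuclideanSpace ℝ (Fin m)) ρ) :=
      IsClosed.completeSpace_coe (hs := isClosed_closedBall)
    set Tx : (closedBall (0 : EuclideanSpace ℝ (Fin m)) ρ) →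
        (closedBall (0 : EuclideanSpace ℝ (Fin m)) ρ) :=
      fun y => ⟨T x y, hTmem x hx y y.2⟩ with hTx
    have hct : ContractingWith (2/3 : NNReal) Tx := by
      constructor
      · rw [← NNReal.coe_lt_coe]; norm_num
      · apply LipschitzWith.of_dist_le_mul
        intro a b
        have h1 := hTsub x hx a a.2 b b.2
        rw [Subtype.dist_eq, Subtype.dist_eq, dist_eq_norm, dist_eq_norm]
        have h2 : ((2/3 : NNReal) : ℝ) = 2/3 := by norm_num
        rw [h2]
        exact h1
    refine ⟨(ContractingWith.fixedPoint Tx hct : ↑(closedBall (0 : EuclideanSpace ℝ (Fin m)) ρ)).1,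
      (ContractingWith.fixedPoint Tx hct).2, ?_⟩
    have h3 := ContractingWith.fixedPoint_isFixedPt hct
    exact congrArg Subtype.val h3
  have huniq : ∀ x ∈ closedBall (0 : EuclideanSpace ℝ (Fin n)) r,
      ∀ y₁ ∈ closedBall (0 : EuclideanSpace ℝ (Fin m)) ρ,
      ∀ y₂ ∈ closedBall (0 : EuclideanSpace ℝ (Fin m)) ρ,
      T x y₁ = y₁ → T x y₂ = y₂ → y₁ = y₂ := by
    intro x hx y₁ h₁ y₂ h₂ e₁ e₂
    have h3 := hTsub x hx y₁ h₁ y₂ h₂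
    rw [e₁, e₂] at h3
    have h4 : ‖y₁ - y₂‖ = 0 := by nlinarith [norm_nonneg (y₁ - y₂)]
    exact sub_eq_zero.mp (norm_eq_zero.mp h4)
  choose g hg1 hg2 using hfix
  set φ : EuclideanSpace ℝ (Fin n) → EuclideanSpace ℝ (Fin m) :=
    fun x => if hx : x ∈ closedBall (0 : EuclideanSpace ℝ (Fin n)) r then g x hx else 0
    with hφdef
  have hφ_mem : ∀ x, ∀ hx : x ∈ closedBall (0 : EuclideanSpace ℝ (Fin n)) r,
      φ x ∈ closedBall (0 : EuclideanSpace ℝ (Fin m)) ρ ∧ T x (φ x) = φ x := by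
    intro x hx
    simp only [hφdef, dif_pos hx]
    exact ⟨hg1 x hx, hg2 x hx⟩
  have hfphi : ∀ x ∈ closedBall (0 : EuclideanSpace ℝ (Fin n)) r, f (x, φ x) = 0 := by
    intro x hx
    have h1 := (hφ_mem x hx).2
    simp only [hTdef] at h1
    have h2 : B (f (x, φ x)) = 0 := by
      have h3 : φ x - B (f (x, φ x)) - φ x = 0 := by rw [h1]; abel
      have h4 : φ x - B (f (x, φ x)) - φ x = -(B (f (x, φ x))) := by abel
      rw [h4] at h3
      simpa using h3
    have h5 := congrArg (pdy f 0 0) h2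
    rw [hAB] at h5
    simpa using h5
  have hφ0 : φ 0 = 0 := by
    apply huniq 0 h0r (φ 0) (hφ_mem 0 h0r).1 0 h0ρ (hφ_mem 0 h0r).2
    show (0 : EuclideanSpace ℝ (Fin m)) - B (f (0, 0)) = 0
    rw [hf0]
    simp
  have hφlip : ∀ x₁ ∈ closedBall (0 : EuclideanSpace ℝ (Fin n)) r,
      ∀ x₂ ∈ closedBall (0 : EuclideanSpace ℝ (Fin n)) r,
      ‖φ x₁ - φ x₂‖ ≤ 3 * α * K * ‖x₁ - x₂‖ := by
    intro x₁ h₁ x₂ h₂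
    have e₁ := (hφ_mem x₁ h₁).2
    have e₂ := (hφ_mem x₂ h₂).2
    have key2 : ‖T x₁ (φ x₂) - T x₂ (φ x₂)‖ ≤ α * (K * ‖x₁ - x₂‖) := by
      have h3 : T x₁ (φ x₂) - T x₂ (φ x₂) = B (f (x₂, φ x₂) - f (x₁, φ x₂)) := by
        simp only [hTdef]
        rw [map_sub]
        abel
      rw [h3]
      calc ‖B (f (x₂, φ x₂) - f (x₁, φ x₂))‖
          ≤ α * ‖f (x₂, φ x₂) - f (x₁, φ x₂)‖ := hBnorm' _
        _ ≤ α * (K * ‖x₂ - x₁‖) := mul_le_mul_of_nonneg_left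
            (hfx (φ x₂) (hsubm (hφ_mem x₂ h₂).1) x₂ (hsubn h₂) x₁ (hsubn h₁)) hαpos.le
        _ = α * (K * ‖x₁ - x₂‖) := by rw [norm_sub_rev]
    have tri : ‖φ x₁ - φ x₂‖ ≤ 2 / 3 * ‖φ x₁ - φ x₂‖ + α * (K * ‖x₁ - x₂‖) := by
      have h6 : φ x₁ - φ x₂ = (T x₁ (φ x₁) - T x₁ (φ x₂)) + (T x₁ (φ x₂) - T x₂ (φ x₂)) := by
        rw [e₁, e₂]; abel
      calc ‖φ x₁ - φ x₂‖
          ≤ ‖T x₁ (φ x₁) - T x₁ (φ x₂)‖ + ‖T x₁ (φ x₂) - T x₂ (φ x₂)‖ := by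
            rw [h6]; exact norm_add_le _ _
        _ ≤ 2 / 3 * ‖φ x₁ - φ x₂‖ + α * (K * ‖x₁ - x₂‖) :=
            add_le_add (hTsub x₁ h₁ _ (hφ_mem x₁ h₁).1 _ (hφ_mem x₂ h₂).1) key2
    nlinarith [tri]
  have hφcont : ContinuousOn φ (closedBall 0 r) := by
    apply LipschitzOnWith.continuousOn (K := Real.toNNReal (3 * α * K))
    rw [lipschitzOnWith_iff_dist_le_mul]
    intro x hx y hy
    rw [dist_eq_norm, dist_eq_norm]
    have h1 := hφlip x hx y hy
    rwa [Real.coe_toNNReal _ (by positivity)]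
  -- ## the lower bound on r
  have hmin : min 1 ((1/4) * ((m + n : ℝ)) ^ (-(6:ℝ)) *
      (frobNorm (pdyMat f)) ^ ((2:ℝ) - 2 * m) * |(pdyMat f).det| ^ 2 *
        K ^ (-(2:ℝ))) ≤ r := by
    rw [hrdef]
    apply min_le_min (le_refl 1)
    have hm1 : (1:ℝ) ≤ (m:ℝ) := by exact_mod_cast hm
    have hn1 : (1:ℝ) ≤ (n:ℝ) := by exact_mod_cast hn
    have hmn2 : (2:ℝ) ≤ (m:ℝ) + (n:ℝ) := by linarith
    have e1 : (frobNorm (pdyMat f)) ^ ((2:ℝ) - 2 * m)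
        = ((frobNorm (pdyMat f) ^ (m - 1)) ^ 2)⁻¹ := by
      have h1 : ((2:ℝ) - 2 * m) = -(((2 * (m - 1) : ℕ) : ℝ)) := by
        have : ((m - 1 : ℕ) : ℝ) = (m : ℝ) - 1 := by
          rw [Nat.cast_sub hm]; simp
        push_cast [this]
        ring
      rw [h1, Real.rpow_neg hfr.le, Real.rpow_natCast, Nat.mul_comm, pow_mul]
    have e2 : ((m + n : ℝ)) ^ (-(6:ℝ)) = (((m:ℝ) + n) ^ (6:ℕ))⁻¹ := by
      rw [Real.rpow_neg (by linarith), ← Real.rpow_natCast]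
      norm_num
    have e3 : K ^ (-(2:ℝ)) = (K ^ (2:ℕ))⁻¹ := by
      rw [Real.rpow_neg hK.le, ← Real.rpow_natCast]
      norm_num
    rw [e1, e2, e3, hαdef]
    have h64 : (64:ℝ) ≤ ((m:ℝ) + n) ^ (6:ℕ) := by
      calc (64:ℝ) = 2 ^ 6 := by norm_num
        _ ≤ ((m:ℝ) + n) ^ 6 := pow_le_pow_left₀ (by norm_num) hmn2 6
    have hP : (0:ℝ) < frobNorm (pdyMat f) ^ (m - 1) := pow_pos hfr _
    have hRHS : 1 / (9 * (frobNorm (pdyMat f) ^ (m - 1) / |(pdyMat f).det|) ^ 2 * K ^ 2)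
        = |(pdyMat f).det| ^ 2 * ((frobNorm (pdyMat f) ^ (m - 1)) ^ 2)⁻¹ * (K ^ 2)⁻¹ / 9 := by
      field_simp
    rw [hRHS]
    have hX : (0:ℝ) < |(pdyMat f).det| ^ 2 * ((frobNorm (pdyMat f) ^ (m - 1)) ^ 2)⁻¹
        * (K ^ 2)⁻¹ := by positivity
    have hcoef : (1/4 : ℝ) * (((m:ℝ) + n) ^ (6:ℕ))⁻¹ ≤ 1 / 9 := by
      have hp : (0:ℝ) < ((m:ℝ) + n) ^ (6:ℕ) := by positivity
      have h1 : (((m:ℝ) + n) ^ (6:ℕ))⁻¹ ≤ (64:ℝ)⁻¹ := inv_anti₀ (by norm_num) h64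
      nlinarith
    calc 1 / 4 * (((m:ℝ) + n) ^ (6:ℕ))⁻¹ * ((frobNorm (pdyMat f) ^ (m - 1)) ^ 2)⁻¹
          * |(pdyMat f).det| ^ 2 * (K ^ 2)⁻¹
        = (1 / 4 * (((m:ℝ) + n) ^ (6:ℕ))⁻¹)
          * (|(pdyMat f).det| ^ 2 * ((frobNorm (pdyMat f) ^ (m - 1)) ^ 2)⁻¹ * (K ^ 2)⁻¹) := by
          ring
      _ ≤ (1 / 9)
          * (|(pdyMat f).det| ^ 2 * ((frobNorm (pdyMat f) ^ (m - 1)) ^ 2)⁻¹ * (K ^ 2)⁻¹) :=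
          mul_le_mul_of_nonneg_right hcoef hX.le
      _ = |(pdyMat f).det| ^ 2 * ((frobNorm (pdyMat f) ^ (m - 1)) ^ 2)⁻¹ * (K ^ 2)⁻¹ / 9 := by
          ring
  -- ## conclusion
  refine ⟨r, hr0, hr1, hmin, φ, hφcont, hφ0, ?_, ?_⟩
  · intro x hx
    exact ⟨mem_closedBall_zero_iff.mp (hφ_mem x hx).1, hfphi x hx⟩
  · intro φ' hcont' h0' hprop' x hx
    have h1 : T x (φ' x) = φ' x := by
      simp only [hTdef]
      rw [(hprop' x hx).2]
      simp
    exact huniq x hx (φ' x) (mem_closedBall_zero_iff.mpr (hprop' x hx).1) (φ x)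
      (hφ_mem x hx).1 h1 (hφ_mem x hx).2
end
end
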